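/- arXiv:2407.19127 — 9 statements merged into one kernel-verified Lean document; each statement's English description precedes it below -/
import Mathlib

section
/- Abrupt revelation is optimal with a more patient agent and common priors: assume δ_P > δ_A > 0 and μ_P = μ_A = μ ∈ (0,1) (so ℓ = 1), and let t* = (1/δ_A)·log(v(1)/v(μ)). Then the pair G_1*(t) = μ·𝟙{t < t*}, G_0*(t) = (1-μ)·𝟙{t < t*} is feasible for the engagement problem (P), and every feasible pair (G_1,G_0) satisfies J(G_1,G_0) ≤ J(G_1*,G_0*) = (1 - (v(μ)/v(1))^{δ_P/δ_A})/δ_P. -/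
open MeasureTheory Set
open scoped Classical

noncomputable section

/-- The principal's objective in the engagement problem (P). -/
def J (δP : ℝ) (G1 G0 : ℝ → ℝ) : ℝ :=
  ∫ t in Ioi (0:ℝ), Real.exp (-δP * t) * (G1 t + G0 t)

/-- Feasibility for the engagement problem (P): `G1` and `G0` are nonnegative and
nonincreasing engagement probability functions with the given initial conditions,
satisfying the agent's obedience constraint at every time `t ≥ 0`. -/
def Feasible (v : ℝ → ℝ) (δA ℓ μP : ℝ) (G1 G0 : ℝ → ℝ) : Prop :=
  (∀ t, 0 ≤ t → 0 ≤ G1 t) ∧ (∀ t, 0 ≤ t → 0 ≤ G0 t) ∧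
  (∀ s t, 0 ≤ s → s ≤ t → G1 t ≤ G1 s) ∧
  (∀ s t, 0 ≤ s → s ≤ t → G0 t ≤ G0 s) ∧
  G1 0 = μP ∧ G0 0 = 1 - μP ∧
  (∀ t, 0 ≤ t → 0 < ℓ * G1 t + G0 t →
    v 1 * (ℓ * G1 t + G0 t)
        - δA * v 1 * ∫ s in Ioi t, (ℓ * G1 s + G0 s) * Real.exp (-δA * (s - t))
      ≥ (ℓ * G1 t + G0 t) * v (ℓ * G1 t / (ℓ * G1 t + G0 t)))

/-! With common priors the obedience constraint at time `0` alone bounds the agent-discounted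
engagement `∫ g(t) e^{-δA t}` of `g = G₁ + G₀` by `(1 - v μ / v 1) / δA`, which is exactly what the
cutoff `𝟙{t < t*}` attains. Since `e^{-δP t} = e^{-(δP - δA) t} e^{-δA t}` with a decreasing first
factor, and `g - 𝟙{t < t*}` is `≤ 0` before `t*` and `≥ 0` after, replacing the first factor by its
value at `t*` only increases `∫ (g - 𝟙{t < t*}) e^{-δP t}`; hence the cutoff is optimal for the
more impatient principal. It is feasible because its continuation value `v 1 e^{-δA (t* - t)}` at
`t < t*` is at least `v 1 e^{-δA t*} = v μ`. -/
open Real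

theorem integral_Ioi_indicator_Iio_mul_exp {a b c : ℝ} (hc : 0 < c) (hab : a ≤ b) :
    ∫ s in Ioi a, (Iio b).indicator 1 s * exp (-c * s) = (exp (-c * a) - exp (-c * b)) / c := by
  have hexp : ∀ x, ∫ s in Ioi x, exp (-c * s) = exp (-c * x) / c := fun x => by
    rw [integral_exp_mul_Ioi (by linarith)]; field_simp
  have hind : (fun s => (Iio b).indicator 1 s * exp (-c * s))
      = (Iio b).indicator fun s => exp (-c * s) := by
    ext s; simp [indicator_apply]
  rw [hind, integral_indicator measurableSet_Iio, Measure.restrict_restrict measurableSet_Iio,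
    Iio_inter_Ioi, ← integral_Ioc_eq_integral_Ioo, ← intervalIntegral.integral_of_le hab,
    ← intervalIntegral.integral_Ioi_sub_Ioi (exp_neg_integrableOn_Ioi a hc) hab, hexp, hexp,
    sub_div]

theorem integral_Ioi_zero_indicator_Iio_mul_exp {c T : ℝ} (hc : 0 < c) (hT : 0 ≤ T) :
    ∫ s in Ioi 0, (Iio T).indicator 1 s * exp (-c * s) = (1 - exp (-c * T)) / c := by
  rw [integral_Ioi_indicator_Iio_mul_exp hc hT, mul_zero, exp_zero]

theorem integrableOn_mul_exp_of_mem_Icc {a c : ℝ} (hc : 0 < c) {g : ℝ → ℝ}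
    (hg : AEMeasurable g (volume.restrict (Ioi a))) (hg01 : ∀ t ∈ Ioi a, g t ∈ Icc 0 1) :
    IntegrableOn (fun t => g t * exp (-c * t)) (Ioi a) := by
  refine Integrable.mono' (exp_neg_integrableOn_Ioi a hc)
    (hg.mul (by fun_prop)).aestronglyMeasurable ?_
  filter_upwards [ae_restrict_mem measurableSet_Ioi] with t ht
  obtain ⟨h0, h1⟩ := hg01 t ht
  rw [norm_mul, Real.norm_of_nonneg h0, Real.norm_of_nonneg (exp_pos _).le]
  exact mul_le_of_le_one_left (exp_pos _).le h1

theorem integral_Ioi_indicator_Iio_mul_exp_sub {a b c : ℝ} (hc : 0 < c) (hab : a ≤ b) :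
    ∫ s in Ioi a, (Iio b).indicator 1 s * exp (-c * (s - a)) = (1 - exp (-c * (b - a))) / c := by
  have hshift : ∀ s, exp (-c * (s - a)) = exp (c * a) * exp (-c * s) := fun s => by
    rw [← exp_add]; ring_nf
  simp_rw [hshift, mul_left_comm _ (exp (c * a))]
  rw [integral_const_mul, integral_Ioi_indicator_Iio_mul_exp hc hab, mul_div_assoc', mul_sub,
    ← exp_add, ← exp_add, show c * a + -c * a = 0 by ring, exp_zero,
    show c * a + -c * b = -c * (b - a) by ring]

theorem sub_indicator_mul_exp_le {c d T t x : ℝ} (hcd : c ≤ d) (hx : x ∈ Icc 0 1) :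
    (x - (Iio T).indicator 1 t) * exp (-d * t)
      ≤ exp (-(d - c) * T) * ((x - (Iio T).indicator 1 t) * exp (-c * t)) := by
  have hsign : (x - (Iio T).indicator 1 t) * (exp (-(d - c) * t) - exp (-(d - c) * T)) ≤ 0 := by
    by_cases ht : t < T
    · rw [indicator_of_mem (show t ∈ Iio T from ht), Pi.one_apply]
      refine mul_nonpos_of_nonpos_of_nonneg (by linarith [hx.2]) (sub_nonneg.2 ?_)
      exact exp_le_exp.2 (by nlinarith)
    · rw [indicator_of_notMem (show t ∉ Iio T from ht), sub_zero]
      refine mul_nonpos_of_nonneg_of_nonpos hx.1 (sub_nonpos.2 ?_)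
      exact exp_le_exp.2 (by nlinarith)
  have hsplit : exp (-d * t) = exp (-(d - c) * t) * exp (-c * t) := by
    rw [← exp_add]; ring_nf
  rw [hsplit]
  nlinarith [exp_pos (-c * t)]

theorem integral_mul_exp_le_of_le_cutoff {a c d T : ℝ} (hc : 0 < c) (hcd : c ≤ d) {g : ℝ → ℝ}
    (hg : AEMeasurable g (volume.restrict (Ioi a))) (hg01 : ∀ t ∈ Ioi a, g t ∈ Icc 0 1)
    (h : ∫ t in Ioi a, g t * exp (-c * t) ≤ ∫ t in Ioi a, (Iio T).indicator 1 t * exp (-c * t)) :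
    ∫ t in Ioi a, g t * exp (-d * t) ≤ ∫ t in Ioi a, (Iio T).indicator 1 t * exp (-d * t) := by
  have hχ : AEMeasurable ((Iio T).indicator (1 : ℝ → ℝ)) (volume.restrict (Ioi a)) :=
    (measurable_one.indicator measurableSet_Iio).aemeasurable
  have hχ01 : ∀ t ∈ Ioi a, (Iio T).indicator (1 : ℝ → ℝ) t ∈ Icc 0 1 := fun t _ => by
    by_cases ht : t < T <;> simp [ht]
  have hd : 0 < d := hc.trans_le hcd
  have hgc := integrableOn_mul_exp_of_mem_Icc hc hg hg01
  have hgd := integrableOn_mul_exp_of_mem_Icc hd hg hg01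
  have hχc := integrableOn_mul_exp_of_mem_Icc hc hχ hχ01
  have hχd := integrableOn_mul_exp_of_mem_Icc hd hχ hχ01
  have key := setIntegral_mono_on (hgd.sub hχd) ((hgc.sub hχc).const_mul (exp (-(d - c) * T)))
    measurableSet_Ioi fun t ht => by
      simpa only [Pi.sub_apply, sub_mul] using sub_indicator_mul_exp_le hcd (hg01 t ht) (T := T)
  simp only [Pi.sub_apply] at key
  rw [integral_sub hgd hχd, integral_const_mul, integral_sub hgc hχc] at key
  nlinarith [exp_pos (-(d - c) * T)]

theorem StrictConvexOn.lt_of_mem_Ioo_of_eq {f : ℝ → ℝ} {a b x : ℝ}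
    (hf : StrictConvexOn ℝ (Icc a b) f) (hx : x ∈ Ioo a b) (hab : f a = f b) : f x < f b := by
  have hlt : a < b := hx.1.trans hx.2
  simpa [hab] using hf.lt_on_openSegment (left_mem_Icc.2 hlt.le) (right_mem_Icc.2 hlt.le)
    hlt.ne (by rwa [openSegment_eq_Ioo hlt])

theorem ite_add_ite_eq_indicator (μ T t : ℝ) :
    (if t < T then μ else 0) + (if t < T then 1 - μ else 0) = (Iio T).indicator 1 t := by
  by_cases ht : t < T <;> simp [ht]

theorem feasible_abrupt {v : ℝ → ℝ} {δA μ T : ℝ} (hδA : 0 < δA) (hμ : μ ∈ Icc 0 1) (hT : 0 < T)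
    (hv1 : 0 ≤ v 1) (hvμ : v μ ≤ v 1 * exp (-δA * T)) :
    Feasible v δA 1 μ (fun t => if t < T then μ else 0) (fun t => if t < T then 1 - μ else 0) := by
  refine ⟨fun t _ => ?_, fun t _ => ?_, fun s t _ hst => ?_, fun s t _ hst => ?_,
    if_pos hT, if_pos hT, fun t ht hpos => ?_⟩
  iterate 4 (beta_reduce; split_ifs <;> linarith [hμ.1, hμ.2])
  simp only [one_mul, ite_add_ite_eq_indicator] at hpos ⊢
  have htT : t < T := by
    by_contra h
    simp [indicator_of_notMem (show t ∉ Iio T from h)] at hpos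
  rw [integral_Ioi_indicator_Iio_mul_exp_sub hδA htT.le, indicator_of_mem (show t ∈ Iio T from htT),
    Pi.one_apply, if_pos htT, div_one, mul_one, one_mul]
  calc v μ ≤ v 1 * exp (-δA * T) := hvμ
    _ ≤ v 1 * exp (-δA * (T - t)) :=
        mul_le_mul_of_nonneg_left (exp_le_exp.2 (by nlinarith)) hv1
    _ = v 1 - δA * v 1 * ((1 - exp (-δA * (T - t))) / δA) := by field_simp; ring

theorem J_eq_integral_mul_exp (δP : ℝ) (G1 G0 : ℝ → ℝ) :
    J δP G1 G0 = ∫ t in Ioi 0, (G1 t + G0 t) * exp (-δP * t) := by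
  simp_rw [J, mul_comm (exp _)]

theorem J_abrupt {δP μ T : ℝ} (hδP : 0 < δP) (hT : 0 ≤ T) :
    J δP (fun t => if t < T then μ else 0) (fun t => if t < T then 1 - μ else 0)
      = (1 - exp (-δP * T)) / δP := by
  simp only [J_eq_integral_mul_exp, ite_add_ite_eq_indicator]
  exact integral_Ioi_zero_indicator_Iio_mul_exp hδP hT

theorem J_le_of_feasible {v G1 G0 : ℝ → ℝ} {δA δP μ T : ℝ} (hδA : 0 < δA) (hδ : δA ≤ δP)
    (hv1 : 0 < v 1) (hT : 0 ≤ T) (hvμ : v 1 * exp (-δA * T) ≤ v μ)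
    (hF : Feasible v δA 1 μ G1 G0) :
    J δP G1 G0 ≤ (1 - exp (-δP * T)) / δP := by
  obtain ⟨hG1, hG0, hG1_anti, hG0_anti, hG1_zero, hG0_zero, hobey⟩ := hF
  set g : ℝ → ℝ := fun t => G1 t + G0 t
  have hg01 : ∀ t ∈ Ioi (0 : ℝ), g t ∈ Icc 0 1 := fun t ht =>
    ⟨add_nonneg (hG1 t ht.le) (hG0 t ht.le), by
      linarith [hG1_anti 0 t le_rfl ht.le, hG0_anti 0 t le_rfl ht.le]⟩
  have hg : AEMeasurable g (volume.restrict (Ioi 0)) := by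
    refine (aemeasurable_restrict_of_antitoneOn measurableSet_Ioi ?_).add
      (aemeasurable_restrict_of_antitoneOn measurableSet_Ioi ?_)
    exacts [fun s hs t _ hst => hG1_anti s t hs.le hst, fun s hs t _ hst => hG0_anti s t hs.le hst]
  have hobey0 := hobey 0 le_rfl (by simp [hG1_zero, hG0_zero])
  simp only [hG1_zero, hG0_zero, sub_zero, one_mul, add_sub_cancel, div_one, mul_one] at hobey0
  have hagent : ∫ t in Ioi 0, g t * exp (-δA * t)
      ≤ ∫ t in Ioi 0, (Iio T).indicator 1 t * exp (-δA * t) := by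
    rw [integral_Ioi_zero_indicator_Iio_mul_exp hδA hT, le_div_iff₀ hδA]
    nlinarith
  calc J δP G1 G0 = ∫ t in Ioi 0, g t * exp (-δP * t) := J_eq_integral_mul_exp δP G1 G0
    _ ≤ ∫ t in Ioi 0, (Iio T).indicator 1 t * exp (-δP * t) :=
      integral_mul_exp_le_of_le_cutoff hδA hδ hg hg01 hagent
    _ = (1 - exp (-δP * T)) / δP := integral_Ioi_zero_indicator_Iio_mul_exp (hδA.trans_le hδ) hT

theorem abrupt_revelation_optimal_general
    (v : ℝ → ℝ) (δA δP μ : ℝ)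
    (hδA : 0 < δA) (hδ : δA < δP)
    (hμ : μ ∈ Ioo (0:ℝ) 1)
    (hconv : StrictConvexOn ℝ (Icc (0:ℝ) 1) v)
    (hpos : ∀ x ∈ Icc (0:ℝ) 1, 0 < v x)
    (hsymm : ∀ x ∈ Icc (0:ℝ) 1, v x = v (1 - x)) :
    let tstar : ℝ := (1 / δA) * Real.log (v 1 / v μ)
    let G1s : ℝ → ℝ := fun t => if t < tstar then μ else 0
    let G0s : ℝ → ℝ := fun t => if t < tstar then 1 - μ else 0
    Feasible v δA 1 μ G1s G0s ∧
    (∀ G1 G0, Feasible v δA 1 μ G1 G0 → J δP G1 G0 ≤ J δP G1s G0s) ∧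
    J δP G1s G0s = (1 - (v μ / v 1) ^ (δP / δA)) / δP := by
  intro tstar G1s G0s
  have hv1 : 0 < v 1 := hpos 1 (right_mem_Icc.2 zero_le_one)
  have hvμ : 0 < v μ := hpos μ (Ioo_subset_Icc_self hμ)
  have hvμ_lt : v μ < v 1 :=
    hconv.lt_of_mem_Ioo_of_eq hμ (by simpa using hsymm 0 (left_mem_Icc.2 zero_le_one))
  have htstar : 0 < tstar := mul_pos (by positivity) (log_pos ((one_lt_div hvμ).2 hvμ_lt))
  have hlog : log (v μ / v 1) = -δA * tstar := by
    simp only [tstar]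
    rw [← inv_div, log_inv]
    field_simp
  have hexpA : v 1 * exp (-δA * tstar) = v μ := by
    rw [← hlog, exp_log (by positivity)]
    field_simp
  have hexpP : exp (-δP * tstar) = (v μ / v 1) ^ (δP / δA) := by
    rw [rpow_def_of_pos (by positivity), hlog]
    field_simp
  have hJs : J δP G1s G0s = (1 - exp (-δP * tstar)) / δP := J_abrupt (hδA.trans hδ) htstar.le
  refine ⟨feasible_abrupt hδA (Ioo_subset_Icc_self hμ) htstar hv1.le hexpA.ge,
    fun G1 G0 hF => hJs ▸ J_le_of_feasible hδA hδ.le hv1 htstar.le hexpA.le hF, by rw [hJs, hexpP]⟩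

/-- **Abrupt revelation is optimal with a more patient agent and common priors.**
If `δP > δA > 0` and the priors agree (`μP = μA = μ`, so `ℓ = 1`), then full revelation
at `t* = (1/δA) log (v 1 / v μ)` is feasible and optimal for the engagement problem,
with value `(1 - (v μ / v 1)^(δP/δA)) / δP`. -/
theorem abrupt_revelation_optimal
    (v : ℝ → ℝ) (δA δP μ : ℝ)
    (hδA : 0 < δA) (hδ : δA < δP)
    (hμ : μ ∈ Ioo (0:ℝ) 1)
    (hconv : StrictConvexOn ℝ (Icc (0:ℝ) 1) v)
    (hdiff : DifferentiableOn ℝ v (Icc (0:ℝ) 1))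
    (hpos : ∀ x ∈ Icc (0:ℝ) 1, 0 < v x)
    (hsymm : ∀ x ∈ Icc (0:ℝ) 1, v x = v (1 - x)) :
    let tstar : ℝ := (1 / δA) * Real.log (v 1 / v μ)
    let G1s : ℝ → ℝ := fun t => if t < tstar then μ else 0
    let G0s : ℝ → ℝ := fun t => if t < tstar then 1 - μ else 0
    Feasible v δA 1 μ G1s G0s ∧
    (∀ G1 G0, Feasible v δA 1 μ G1 G0 → J δP G1 G0 ≤ J δP G1s G0s) ∧
    J δP G1s G0s = (1 - (v μ / v 1) ^ (δP / δA)) / δP :=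
  abrupt_revelation_optimal_general v δA δP μ hδA hδ hμ hconv hpos hsymm

end
end

section
/- Phase-1 belief dynamics under common priors and a more patient principal: fix δ_A > 0 and μ_P ∈ (1/2, 1). The integrand I(x) = (v(1) - v(x) - (1-x)·v'(x)) / ((1-x)·v(x)) is positive and continuous on [1/2, μ_P], and, setting t* by δ_A·t* = ∫_{1/2}^{μ_P} I(x) dx, there is a unique continuous strictly decreasing function m : [0,t*] → [1/2, μ_P] such that δ_A·t = ∫_{m(t)}^{μ_P} I(x) dx for all t ∈ [0,t*]; moreover m(0) = μ_P, m(t*) = 1/2, m is differentiable on (0,t*), and -δ_A = (m'(t)/v(m(t)))·[(v(1) - v(m(t)))/(1 - m(t)) - v'(m(t))] for all t ∈ (0,t*). -/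
/-!
Strict convexity puts the tangent line of `v` at `x < 1` strictly below the chord to `1`, which
is the positivity of the integrand `I`; by Darboux's theorem the strictly increasing `v'` has no
jumps, so `I` is continuous on `(0, 1)`. Hence `F y = ∫_y^{μP} I` is a continuous strictly
decreasing bijection `[1/2, μP] → [0, δA t*]`, `m t = F⁻¹ (δA t)` is the unique solution, and the
inverse function theorem gives `m' = -δA / I (m)`, which is the stated ODE once
`I x · v x = (v 1 - v x) / (1 - x) - v' x` is substituted.
-/

open MeasureTheory Set Topology Filter

namespace StrictConvexOn

variable {S : Set ℝ} {f f' : ℝ → ℝ}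

lemma strictMonoOn_of_hasDerivWithinAt (hfc : StrictConvexOn ℝ S f)
    (hf : ∀ x ∈ S, HasDerivWithinAt f (f' x) S x) : StrictMonoOn f' S :=
  fun x hx y hy hxy => (hfc.lt_slope_of_hasDerivWithinAt hx hy hxy (hf x hx)).trans
    (hfc.slope_lt_of_hasDerivWithinAt hx hy hxy (hf y hy))

/-- By Darboux's theorem `f' '' S` is an interval, and a strictly monotone function onto an
interval cannot jump. -/
lemma continuousOn_interior_of_hasDerivWithinAt (hfc : StrictConvexOn ℝ S f)
    (hf : ∀ x ∈ S, HasDerivWithinAt f (f' x) S x) : ContinuousOn f' (interior S) := by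
  have hmono := hfc.strictMonoOn_of_hasDerivWithinAt hf
  have himage : (f' '' S).OrdConnected := hfc.1.ordConnected.image_hasDerivWithinAt hf
  intro x hx
  have hS : S ∈ 𝓝 x := mem_interior_iff_mem_nhds.1 hx
  obtain ⟨l, u, ⟨hlx, hxu⟩, hlu⟩ := mem_nhds_iff_exists_Ioo_subset.1 hS
  obtain ⟨y, hly, hyx⟩ := exists_between hlx
  obtain ⟨z, hxz, hzu⟩ := exists_between hxu
  have hy : y ∈ S := hlu ⟨hly, hyx.trans hxu⟩
  have hz : z ∈ S := hlu ⟨hlx.trans hxz, hzu⟩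
  have hxS : x ∈ S := interior_subset hx
  refine (hmono.continuousAt_of_image_mem_nhds hS ?_).continuousWithinAt
  exact mem_of_superset (Ioo_mem_nhds (hmono hy hxS hyx) (hmono hxS hz hxz))
    (Ioo_subset_Icc_self.trans (himage.out (mem_image_of_mem _ hy) (mem_image_of_mem _ hz)))

end StrictConvexOn

theorem StrictAntiOn.exists_continuous_inverse {F : ℝ → ℝ} {a b : ℝ} (hab : a ≤ b)
    (hF : ContinuousOn F (Icc a b)) (hanti : StrictAntiOn F (Icc a b)) :
    ∃ g : ℝ → ℝ, Continuous g ∧ (∀ s, g s ∈ Icc a b) ∧ ∀ s ∈ Icc (F b) (F a), F (g s) = s := by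
  have hmaps : MapsTo F (Icc a b) (Icc (F b) (F a)) := fun y hy =>
    ⟨hanti.antitoneOn hy (right_mem_Icc.2 hab) hy.2, hanti.antitoneOn (left_mem_Icc.2 hab) hy hy.1⟩
  have hsurj : SurjOn F (Icc a b) (Icc (F b) (F a)) := intermediate_value_Icc' hab hF
  let e : Icc a b ≃ Icc (F b) (F a) := Equiv.ofBijective hmaps.restrict
    ⟨hmaps.restrict_inj.2 hanti.injOn, hmaps.restrict_surjective_iff.2 hsurj⟩
  let h := Continuous.homeoOfEquivCompactToT2 (f := e) (hF.mapsToRestrict hmaps)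
  have hle : F b ≤ F a := hanti.antitoneOn (left_mem_Icc.2 hab) (right_mem_Icc.2 hab) hab
  refine ⟨fun s => h.symm (projIcc (F b) (F a) hle s), by fun_prop, fun s => (h.symm _).2,
    fun s hs => ?_⟩
  show F (h.symm (projIcc (F b) (F a) hle s)) = s
  rw [projIcc_of_mem hle hs]
  exact congrArg Subtype.val (h.apply_symm_apply ⟨s, hs⟩)

section IntervalIntegral

variable {I : ℝ → ℝ} {a b δ : ℝ}

lemma strictAntiOn_integral_left (hI : ContinuousOn I (Icc a b))
    (hpos : ∀ x ∈ Icc a b, 0 < I x) : StrictAntiOn (fun y => ∫ x in y..b, I x) (Icc a b) := by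
  intro y₁ h₁ y₂ h₂ hlt
  have hint : ∀ {c d}, c ∈ Icc a b → d ∈ Icc a b → IntervalIntegrable I volume c d :=
    fun hc hd => (hI.mono (uIcc_subset_Icc hc hd)).intervalIntegrable
  have hsplit := intervalIntegral.integral_add_adjacent_intervals (hint h₁ h₂)
    (hint h₂ (right_mem_Icc.2 (h₁.1.trans h₁.2)))
  have hmid : 0 < ∫ x in y₁..y₂, I x := intervalIntegral.intervalIntegral_pos_of_pos_on
    (hint h₁ h₂) (fun x hx => hpos x ⟨h₁.1.trans hx.1.le, hx.2.le.trans h₂.2⟩) hlt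
  dsimp only
  linarith

theorem exists_strictAntiOn_mul_eq_integral (hab : a ≤ b) (hδ : 0 < δ)
    (hI : ContinuousOn I (Icc a b)) (hpos : ∀ x ∈ Icc a b, 0 < I x) :
    ∃ m : ℝ → ℝ, Continuous m ∧ StrictAntiOn m (Icc 0 ((∫ x in a..b, I x) / δ)) ∧
      (∀ t, m t ∈ Icc a b) ∧
      ∀ t ∈ Icc 0 ((∫ x in a..b, I x) / δ), δ * t = ∫ x in (m t)..b, I x := by
  set F : ℝ → ℝ := fun y => ∫ x in y..b, I x
  have hanti : StrictAntiOn F (Icc a b) := strictAntiOn_integral_left hI hpos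
  have hcont : ContinuousOn F (Icc a b) := by
    have hint : IntegrableOn I (uIcc a b) := by rw [uIcc_of_le hab]; exact hI.integrableOn_Icc
    rw [← uIcc_of_le hab]
    exact intervalIntegral.continuousOn_primitive_interval_left hint
  obtain ⟨g, hg, hgK, hFg⟩ := hanti.exists_continuous_inverse hab hcont
  have hFg' : ∀ t ∈ Icc 0 (F a / δ), F (g (δ * t)) = δ * t := by
    intro t ht
    refine hFg _ ⟨?_, ?_⟩
    · rw [show F b = 0 from intervalIntegral.integral_same]
      exact mul_nonneg hδ.le ht.1
    · simpa only [mul_div_cancel₀ _ hδ.ne'] using mul_le_mul_of_nonneg_left ht.2 hδ.le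
  refine ⟨fun t => g (δ * t), hg.comp (continuous_const_mul δ), fun t₁ h₁ t₂ h₂ hlt => ?_,
    fun t => hgK _, fun t ht => (hFg' t ht).symm⟩
  rw [← hanti.lt_iff_gt (hgK _) (hgK _), hFg' t₁ h₁, hFg' t₂ h₂]
  exact mul_lt_mul_of_pos_left hlt hδ

lemma hasDerivAt_of_mul_eq_integral (hI : ContinuousOn I (Icc a b)) (hδ : δ ≠ 0) {m : ℝ → ℝ}
    {t : ℝ} (hm : ContinuousAt m t) (hmt : m t ∈ Ioo a b) (hIm : I (m t) ≠ 0)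
    (heq : ∀ᶠ s in 𝓝 t, δ * s = ∫ x in (m s)..b, I x) : HasDerivAt m (-δ / I (m t)) t := by
  have hF : HasDerivAt (fun y => ∫ x in y..b, I x) (-I (m t)) (m t) :=
    intervalIntegral.integral_hasDerivAt_left
      ((hI.mono (Icc_subset_Icc_left hmt.1.le)).intervalIntegrable_of_Icc hmt.2.le)
      ((hI.mono Ioo_subset_Icc_self).stronglyMeasurableAtFilter isOpen_Ioo _ hmt)
      (hI.continuousAt (Icc_mem_nhds hmt.1 hmt.2))
  have hinv := HasDerivAt.of_local_left_inverse hm (hF.div_const δ)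
    (div_ne_zero (neg_ne_zero.2 hIm) hδ)
    (heq.mono fun s hs => by rw [← hs, mul_div_cancel_left₀ _ hδ])
  rwa [inv_div, div_neg, ← neg_div] at hinv

end IntervalIntegral

noncomputable def beliefIntegrand (v v' : ℝ → ℝ) (x : ℝ) : ℝ :=
  (v 1 - v x - (1 - x) * v' x) / ((1 - x) * v x)

section BeliefIntegrand

variable {v v' : ℝ → ℝ}

lemma beliefIntegrand_pos (hconv : StrictConvexOn ℝ (Icc 0 1) v)
    (hderiv : ∀ x ∈ Icc (0:ℝ) 1, HasDerivWithinAt v (v' x) (Icc 0 1) x)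
    (hpos : ∀ x ∈ Icc (0:ℝ) 1, 0 < v x) {x : ℝ} (hx : x ∈ Ico 0 1) :
    0 < beliefIntegrand v v' x := by
  have hx' : x ∈ Icc 0 1 := Ico_subset_Icc_self hx
  have h1x : 0 < 1 - x := sub_pos.2 hx.2
  have htangent := hconv.lt_slope_of_hasDerivWithinAt hx' (right_mem_Icc.2 zero_le_one) hx.2
    (hderiv x hx')
  rw [slope_def_field, lt_div_iff₀ h1x] at htangent
  exact div_pos (by linarith) (mul_pos h1x (hpos x hx'))

lemma continuousOn_beliefIntegrand (hconv : StrictConvexOn ℝ (Icc 0 1) v)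
    (hderiv : ∀ x ∈ Icc (0:ℝ) 1, HasDerivWithinAt v (v' x) (Icc 0 1) x)
    (hpos : ∀ x ∈ Icc (0:ℝ) 1, 0 < v x) : ContinuousOn (beliefIntegrand v v') (Ioo 0 1) := by
  have hv' : ContinuousOn v' (Ioo 0 1) := by
    simpa only [interior_Icc] using hconv.continuousOn_interior_of_hasDerivWithinAt hderiv
  have hv : ContinuousOn v (Ioo 0 1) := fun x hx =>
    (hderiv x (Ioo_subset_Icc_self hx)).continuousWithinAt.mono Ioo_subset_Icc_self
  exact ContinuousOn.div (by fun_prop) (by fun_prop) fun x hx =>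
    (mul_pos (sub_pos.2 hx.2) (hpos x (Ioo_subset_Icc_self hx))).ne'

lemma beliefIntegrand_mul_eq {x : ℝ} (hx : x ≠ 1) (hvx : v x ≠ 0) :
    beliefIntegrand v v' x * v x = (v 1 - v x) / (1 - x) - v' x := by
  have h1x : 1 - x ≠ 0 := sub_ne_zero.2 hx.symm
  unfold beliefIntegrand
  field_simp

end BeliefIntegrand

theorem phase1_belief_dynamics_general
    (v v' : ℝ → ℝ) (δA μP : ℝ)
    (hδA : 0 < δA) (hμP : μP ∈ Ioo (1/2 : ℝ) 1)
    (hconv : StrictConvexOn ℝ (Icc (0:ℝ) 1) v)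
    (hderiv : ∀ x ∈ Icc (0:ℝ) 1, HasDerivWithinAt v (v' x) (Icc (0:ℝ) 1) x)
    (hpos : ∀ x ∈ Icc (0:ℝ) 1, 0 < v x) :
    let I : ℝ → ℝ := fun x => (v 1 - v x - (1 - x) * v' x) / ((1 - x) * v x)
    let tstar : ℝ := (∫ x in (1/2 : ℝ)..μP, I x) / δA
    (∀ x ∈ Icc (1/2 : ℝ) μP, 0 < I x) ∧
    ContinuousOn I (Icc (1/2 : ℝ) μP) ∧
    ∃ m : ℝ → ℝ,
      (ContinuousOn m (Icc (0:ℝ) tstar) ∧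
       StrictAntiOn m (Icc (0:ℝ) tstar) ∧
       (∀ t ∈ Icc (0:ℝ) tstar, m t ∈ Icc (1/2 : ℝ) μP) ∧
       (∀ t ∈ Icc (0:ℝ) tstar, δA * t = ∫ x in (m t)..μP, I x)) ∧
      (∀ m₂ : ℝ → ℝ,
        (ContinuousOn m₂ (Icc (0:ℝ) tstar) ∧
         StrictAntiOn m₂ (Icc (0:ℝ) tstar) ∧
         (∀ t ∈ Icc (0:ℝ) tstar, m₂ t ∈ Icc (1/2 : ℝ) μP) ∧
         (∀ t ∈ Icc (0:ℝ) tstar, δA * t = ∫ x in (m₂ t)..μP, I x)) →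
        EqOn m₂ m (Icc (0:ℝ) tstar)) ∧
      m 0 = μP ∧ m tstar = 1/2 ∧
      (∀ t ∈ Ioo (0:ℝ) tstar, ∃ d : ℝ, HasDerivAt m d t ∧
        -δA = (d / v (m t)) * ((v 1 - v (m t)) / (1 - m t) - v' (m t))) := by
  intro I tstar
  have hsub : Icc (1/2 : ℝ) μP ⊆ Ioo 0 1 := Icc_subset_Ioo (by norm_num) hμP.2
  have hIpos : ∀ x ∈ Icc (1/2 : ℝ) μP, 0 < I x := fun x hx =>
    beliefIntegrand_pos hconv hderiv hpos (Ioo_subset_Ico_self (hsub hx))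
  have hIcont : ContinuousOn I (Icc (1/2 : ℝ) μP) :=
    (continuousOn_beliefIntegrand hconv hderiv hpos).mono hsub
  obtain ⟨m, hmcont, hmanti, hmK, hmeq⟩ :=
    exists_strictAntiOn_mul_eq_integral hμP.1.le hδA hIcont hIpos
  have hinj := (strictAntiOn_integral_left hIcont hIpos).injOn
  have hT : 0 ≤ tstar :=
    div_nonneg (intervalIntegral.integral_nonneg hμP.1.le fun x hx => (hIpos x hx).le) hδA.le
  have hm0 : m 0 = μP := hinj (hmK 0) (right_mem_Icc.2 hμP.1.le) <| by
    simpa using (hmeq 0 ⟨le_rfl, hT⟩).symm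
  have hmT : m tstar = 1/2 := hinj (hmK _) (left_mem_Icc.2 hμP.1.le)
    ((hmeq tstar ⟨hT, le_rfl⟩).symm.trans (mul_div_cancel₀ _ hδA.ne'))
  refine ⟨hIpos, hIcont, m, ⟨hmcont.continuousOn, hmanti, fun t _ => hmK t, hmeq⟩, ?_, hm0, hmT, ?_⟩
  · rintro m₂ ⟨-, -, hm₂K, hm₂eq⟩ t ht
    exact hinj (hm₂K t ht) (hmK t) ((hm₂eq t ht).symm.trans (hmeq t ht))
  · intro t ht
    have hmt : m t ∈ Ioo (1/2) μP :=
      ⟨hmT ▸ hmanti (Ioo_subset_Icc_self ht) ⟨hT, le_rfl⟩ ht.2,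
        hm0 ▸ hmanti ⟨le_rfl, hT⟩ (Ioo_subset_Icc_self ht) ht.1⟩
    have hw := hsub (Ioo_subset_Icc_self hmt)
    have hvw : v (m t) ≠ 0 := (hpos _ (Ioo_subset_Icc_self hw)).ne'
    have hIw : I (m t) ≠ 0 := (hIpos _ (Ioo_subset_Icc_self hmt)).ne'
    refine ⟨_, hasDerivAt_of_mul_eq_integral hIcont hδA.ne' hmcont.continuousAt hmt hIw
      (eventually_of_mem (Ioo_mem_nhds ht.1 ht.2) fun s hs => hmeq s (Ioo_subset_Icc_self hs)), ?_⟩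
    rw [← beliefIntegrand_mul_eq hw.2.ne hvw, div_div]
    exact (div_mul_cancel₀ _ (mul_ne_zero hIw hvw)).symm

/-- **Phase-1 belief dynamics under common priors and a more patient principal.**
For `μP ∈ (1/2,1)`, the integrand `I` is positive and continuous on `[1/2, μP]`, and the
integral equation `δA t = ∫_{m(t)}^{μP} I(x) dx` has a unique continuous strictly
decreasing solution `m : [0,t*] → [1/2,μP]`; it satisfies `m 0 = μP`, `m t* = 1/2`, is
differentiable on `(0,t*)` and solves the stated ODE there. -/
theorem phase1_belief_dynamics
    (v v' : ℝ → ℝ) (δA μP : ℝ)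
    (hδA : 0 < δA) (hμP : μP ∈ Ioo (1/2 : ℝ) 1)
    (hconv : StrictConvexOn ℝ (Icc (0:ℝ) 1) v)
    (hderiv : ∀ x ∈ Icc (0:ℝ) 1, HasDerivWithinAt v (v' x) (Icc (0:ℝ) 1) x)
    (hpos : ∀ x ∈ Icc (0:ℝ) 1, 0 < v x)
    (hsymm : ∀ x ∈ Icc (0:ℝ) 1, v x = v (1 - x)) :
    let I : ℝ → ℝ := fun x => (v 1 - v x - (1 - x) * v' x) / ((1 - x) * v x)
    let tstar : ℝ := (∫ x in (1/2 : ℝ)..μP, I x) / δA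
    (∀ x ∈ Icc (1/2 : ℝ) μP, 0 < I x) ∧
    ContinuousOn I (Icc (1/2 : ℝ) μP) ∧
    ∃ m : ℝ → ℝ,
      (ContinuousOn m (Icc (0:ℝ) tstar) ∧
       StrictAntiOn m (Icc (0:ℝ) tstar) ∧
       (∀ t ∈ Icc (0:ℝ) tstar, m t ∈ Icc (1/2 : ℝ) μP) ∧
       (∀ t ∈ Icc (0:ℝ) tstar, δA * t = ∫ x in (m t)..μP, I x)) ∧
      (∀ m₂ : ℝ → ℝ,
        (ContinuousOn m₂ (Icc (0:ℝ) tstar) ∧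
         StrictAntiOn m₂ (Icc (0:ℝ) tstar) ∧
         (∀ t ∈ Icc (0:ℝ) tstar, m₂ t ∈ Icc (1/2 : ℝ) μP) ∧
         (∀ t ∈ Icc (0:ℝ) tstar, δA * t = ∫ x in (m₂ t)..μP, I x)) →
        EqOn m₂ m (Icc (0:ℝ) tstar)) ∧
      m 0 = μP ∧ m tstar = 1/2 ∧
      (∀ t ∈ Ioo (0:ℝ) tstar, ∃ d : ℝ, HasDerivAt m d t ∧
        -δA = (d / v (m t)) * ((v 1 - v (m t)) / (1 - m t) - v' (m t))) :=
  phase1_belief_dynamics_general v v' δA μP hδA hμP hconv hderiv hpos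
end

section
/- Stationary symmetric Poisson revelation is optimal at the steady-state belief pair: assume δ_A > δ_P > 0, μ_A ∈ (0,1), and μ_P = μ_A + μ_A(1-μ_A)·v'(μ_A)/(v(μ_A) + (δ_P/(δ_A-δ_P))·v(1)) with μ_P ∈ (0,1). Let λ = δ_A·v(μ_A)/(v(1)-v(μ_A)) (equivalently (λ/(λ+δ_A))·v(1) = v(μ_A)). Then the pair G_1*(t) = μ_P·e^{-λt}, G_0*(t) = (1-μ_P)·e^{-λt} is feasible for the engagement problem (P), with the obedience constraint holding with equality at every t, and every feasible pair (G_1,G_0) satisfies J(G_1,G_0) ≤ J(G_1*,G_0*). -/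
/-!
Along the stationary Poisson policy every engagement probability decays at the common rate `λ`
and the agent's belief `ℓG₁/(ℓG₁ + G₀)` stays at `μA`, so obedience reduces to
`λ v(1) = (λ + δA) v(μA)`, which is the definition of `λ`.

Optimality is weak duality. Bounding `v` below by its tangent line `a + d x` at `μA` linearises
obedience: `δA v(1) ∫ₜ^∞ G_A(s) e^{-δA (s-t)} ds ≤ (v(1) - a - d) ℓG₁(t) + (v(1) - a) G₀(t)`.
Multiplying by `(δA - δP) e^{-δP t}`, integrating over `t > 0` and exchanging the order of
integration, the tail integrals telescope to the constraint at `t = 0`, whose right side is fixed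
by `G₁(0) = μP`, `G₀(0) = 1 - μP`. The formula for `μP` is exactly the condition that the
resulting weights on `G₁` and `G₀` coincide, so the left side is a positive multiple of
`J(G₁, G₀)`. The stationary policy keeps the belief at the tangency point and makes every
inequality an equality, so it attains the bound.
-/

open MeasureTheory Set

noncomputable section

open Real

lemma integral_Ioi_exp_neg_mul {k : ℝ} (hk : 0 < k) (t : ℝ) :
    ∫ s in Ioi t, exp (-k * s) = exp (-k * t) / k := by
  rw [integral_exp_mul_Ioi (neg_lt_zero.2 hk), neg_div_neg_eq]

lemma integral_Ioi_exp_neg_mul_mul_exp_sub {lam δ : ℝ} (h : 0 < lam + δ) (c t : ℝ) :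
    ∫ s in Ioi t, c * exp (-lam * s) * exp (-δ * (s - t)) = c * exp (-lam * t) / (lam + δ) := by
  have hrw : ∀ s, c * exp (-lam * s) * exp (-δ * (s - t))
      = c * exp (δ * t) * exp (-(lam + δ) * s) := fun s => by
    rw [mul_assoc, ← exp_add, mul_assoc, ← exp_add]; ring_nf
  simp only [hrw, integral_const_mul, integral_Ioi_exp_neg_mul h]
  rw [mul_div_assoc', mul_assoc, ← exp_add]; ring_nf

lemma integral_exp_mul {c : ℝ} (hc : c ≠ 0) (a b : ℝ) :
    ∫ x in a..b, exp (c * x) = (exp (c * b) - exp (c * a)) / c := by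
  rw [intervalIntegral.integral_comp_mul_left (fun x => exp x) hc, integral_exp, smul_eq_mul,
    inv_mul_eq_div]

lemma integrableOn_Ioi_of_abs_le_exp {f : ℝ → ℝ} {C k : ℝ} (hk : 0 < k) (hf : Measurable f)
    (hC : ∀ s, |f s| ≤ C * exp (-k * s)) (t : ℝ) : IntegrableOn f (Ioi t) :=
  ((exp_neg_integrableOn_Ioi t hk).const_mul C).mono' hf.aestronglyMeasurable
    (ae_of_all _ hC)

lemma integrable_exp_mul_of_lt {γ δ C : ℝ} {f : ℝ → ℝ} (hγ : 0 < γ) (hγδ : γ < δ)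
    (hf : Measurable f) (hC : ∀ s, |f s| ≤ C * exp (-δ * s)) :
    Integrable (fun p : ℝ × ℝ => if p.1 < p.2 then exp (γ * p.1) * f p.2 else 0)
      ((volume.restrict (Ioi 0)).prod (volume.restrict (Ioi 0))) := by
  have hC0 : 0 ≤ C := by simpa using (abs_nonneg _).trans (hC 0)
  have hε : 0 < (δ - γ) / 2 := by linarith
  refine ((exp_neg_integrableOn_Ioi 0 hε).mul_prod
    ((exp_neg_integrableOn_Ioi 0 hε).const_mul C)).mono' ?_ (ae_of_all _ ?_)
  · exact (Measurable.ite (measurableSet_lt measurable_fst measurable_snd)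
      ((measurable_const.mul measurable_fst).exp.mul (hf.comp measurable_snd))
      measurable_const).aestronglyMeasurable
  rintro ⟨t, s⟩
  simp only [Real.norm_eq_abs]
  split_ifs with hts
  · rw [abs_mul, abs_of_pos (exp_pos _)]
    calc exp (γ * t) * |f s| ≤ exp (γ * t) * (C * exp (-δ * s)) := by gcongr; exact hC s
      _ = C * exp (γ * t + -δ * s) := by rw [exp_add]; ring
      _ ≤ C * exp (-((δ - γ) / 2) * t + -((δ - γ) / 2) * s) :=
        mul_le_mul_of_nonneg_left (exp_le_exp.2 (by nlinarith)) hC0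
      _ = _ := by rw [exp_add]; ring
  · rw [abs_zero]; positivity

lemma integral_exp_mul_integral_Ioi {γ δ C : ℝ} {f : ℝ → ℝ} (hγ : 0 < γ) (hγδ : γ < δ)
    (hf : Measurable f) (hC : ∀ s, |f s| ≤ C * exp (-δ * s)) :
    γ * ∫ t in Ioi 0, exp (γ * t) * ∫ s in Ioi t, f s
      = (∫ s in Ioi 0, exp (γ * s) * f s) - ∫ s in Ioi 0, f s := by
  set F : ℝ → ℝ → ℝ := fun t s => if t < s then exp (γ * t) * f s else 0
  have hinner_s : ∀ t ∈ Ioi (0 : ℝ),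
      ∫ s in Ioi 0, F t s = exp (γ * t) * ∫ s in Ioi t, f s := by
    intro t ht
    have : F t = (Ioi t).indicator (fun s => exp (γ * t) * f s) := by
      ext s; simp [F, indicator, mem_Ioi]
    rw [this, integral_indicator measurableSet_Ioi, Measure.restrict_restrict measurableSet_Ioi,
      inter_eq_left.2 (Ioi_subset_Ioi (le_of_lt ht)), integral_const_mul]
  have hinner_t : ∀ s ∈ Ioi (0 : ℝ),
      ∫ t in Ioi 0, F t s = (exp (γ * s) - 1) / γ * f s := by
    intro s hs
    have : (fun t => F t s) = (Iio s).indicator (fun t => exp (γ * t) * f s) := by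
      ext t; simp [F, indicator, mem_Iio]
    rw [this, integral_indicator measurableSet_Iio, Measure.restrict_restrict measurableSet_Iio,
      Iio_inter_Ioi, ← integral_Ioc_eq_integral_Ioo, ← intervalIntegral.integral_of_le hs.le,
      intervalIntegral.integral_mul_const, integral_exp_mul hγ.ne', mul_zero, exp_zero]
  have hexp_int : IntegrableOn (fun s => exp (γ * s) * f s) (Ioi 0) := by
    refine integrableOn_Ioi_of_abs_le_exp (C := C) (k := δ - γ) (by linarith)
      (by fun_prop) (fun s => ?_) 0
    rw [abs_mul, abs_of_pos (exp_pos _)]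
    calc exp (γ * s) * |f s| ≤ exp (γ * s) * (C * exp (-δ * s)) := by gcongr; exact hC s
      _ = C * exp (-(δ - γ) * s) := by rw [mul_left_comm, ← exp_add]; ring_nf
  calc γ * ∫ t in Ioi 0, exp (γ * t) * ∫ s in Ioi t, f s
      = γ * ∫ t in Ioi 0, ∫ s in Ioi 0, F t s := by
        rw [setIntegral_congr_fun measurableSet_Ioi hinner_s]
    _ = γ * ∫ s in Ioi 0, ∫ t in Ioi 0, F t s := by
        rw [integral_integral_swap (integrable_exp_mul_of_lt hγ hγδ hf hC)]
    _ = ∫ s in Ioi 0, (exp (γ * s) * f s - f s) := by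
        rw [setIntegral_congr_fun measurableSet_Ioi hinner_t, ← integral_const_mul]
        congr 1 with s
        field_simp
    _ = (∫ s in Ioi 0, exp (γ * s) * f s) - ∫ s in Ioi 0, f s := integral_sub hexp_int
        (integrableOn_Ioi_of_abs_le_exp (by linarith) hf hC 0)

lemma integrableOn_exp_mul_integral_Ioi {γ δ K : ℝ} {g : ℝ → ℝ} (hδ : 0 < δ) (hγδ : γ < δ)
    (hg : Measurable g) (hg0 : ∀ t, 0 ≤ g t) (hgK : ∀ t, g t ≤ K) :
    IntegrableOn (fun t => exp (γ * t) * ∫ s in Ioi t, g s * exp (-δ * s)) (Ioi 0) := by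
  have hf0 : ∀ s, 0 ≤ g s * exp (-δ * s) := fun s => mul_nonneg (hg0 s) (exp_pos _).le
  have hfK : ∀ s, g s * exp (-δ * s) ≤ K * exp (-δ * s) := fun s =>
    mul_le_mul_of_nonneg_right (hgK s) (exp_pos _).le
  have hf_int : ∀ t, IntegrableOn (fun s => g s * exp (-δ * s)) (Ioi t) :=
    integrableOn_Ioi_of_abs_le_exp hδ (by fun_prop) fun s =>
      (abs_of_nonneg (hf0 s)).trans_le (hfK s)
  have hH : Antitone fun t => ∫ s in Ioi t, g s * exp (-δ * s) := fun s t hst =>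
    setIntegral_mono_set (hf_int s) (ae_of_all _ hf0) (Ioi_subset_Ioi hst).eventuallyLE
  have hHm := hH.measurable
  refine integrableOn_Ioi_of_abs_le_exp (C := K / δ) (sub_pos.2 hγδ) (by fun_prop)
    (fun t => ?_) 0
  rw [abs_of_nonneg (mul_nonneg (exp_pos _).le
    (setIntegral_nonneg measurableSet_Ioi fun s _ => hf0 s))]
  calc exp (γ * t) * ∫ s in Ioi t, g s * exp (-δ * s)
      ≤ exp (γ * t) * ∫ s in Ioi t, K * exp (-δ * s) :=
        mul_le_mul_of_nonneg_left (setIntegral_mono_on (hf_int t)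
          ((exp_neg_integrableOn_Ioi t hδ).const_mul K) measurableSet_Ioi fun s _ => hfK s)
          (exp_pos _).le
    _ = K / δ * exp (-(δ - γ) * t) := by
        rw [integral_const_mul, integral_Ioi_exp_neg_mul hδ,
          show -(δ - γ) * t = γ * t + -δ * t by ring, exp_add]
        ring

lemma integral_exp_mul_sub_le_of_tail_le {δA δP c K : ℝ} {g φ : ℝ → ℝ}
    (hδP : 0 < δP) (hδ : δP < δA) (hg : Measurable g) (hg0 : ∀ t, 0 ≤ g t) (hgK : ∀ t, g t ≤ K)
    (hint : IntegrableOn (fun t => exp (-δP * t) * (c * g t - (δA - δP) * φ t)) (Ioi 0))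
    (htail : ∀ t, 0 ≤ t → c * ∫ s in Ioi t, g s * exp (-δA * (s - t)) ≤ φ t) :
    ∫ t in Ioi 0, exp (-δP * t) * (c * g t - (δA - δP) * φ t) ≤ φ 0 := by
  have hδA : 0 < δA := hδP.trans hδ
  set f : ℝ → ℝ := fun s => g s * exp (-δA * s)
  set H : ℝ → ℝ := fun t => ∫ s in Ioi t, f s
  have hfK : ∀ s, |f s| ≤ K * exp (-δA * s) := fun s => by
    rw [abs_of_nonneg (mul_nonneg (hg0 s) (exp_pos _).le)]
    exact mul_le_mul_of_nonneg_right (hgK s) (exp_pos _).le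
  have htail_eq : ∀ t, ∫ s in Ioi t, g s * exp (-δA * (s - t)) = exp (δA * t) * H t := by
    intro t
    rw [← integral_const_mul]
    congr 1 with s
    rw [mul_left_comm, ← exp_add]; ring_nf
  have hexpf_eq : ∀ t, exp ((δA - δP) * t) * f t = exp (-δP * t) * g t := fun t => by
    rw [mul_left_comm, ← exp_add]; ring_nf
  have hexpf : IntegrableOn (fun t => exp ((δA - δP) * t) * f t) (Ioi 0) := by
    refine integrableOn_Ioi_of_abs_le_exp (C := K) hδP (by fun_prop) (fun t => ?_) 0
    rw [hexpf_eq, abs_of_nonneg (mul_nonneg (exp_pos _).le (hg0 t)), mul_comm]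
    exact mul_le_mul_of_nonneg_right (hgK t) (exp_pos _).le
  have hexpH : IntegrableOn (fun t => exp ((δA - δP) * t) * H t) (Ioi 0) :=
    integrableOn_exp_mul_integral_Ioi hδA (by linarith) hg hg0 hgK
  calc ∫ t in Ioi 0, exp (-δP * t) * (c * g t - (δA - δP) * φ t)
      ≤ ∫ t in Ioi 0, c * (exp ((δA - δP) * t) * f t
          - (δA - δP) * (exp ((δA - δP) * t) * H t)) := by
        refine setIntegral_mono_on hint ((hexpf.sub (hexpH.const_mul _)).const_mul c)
          measurableSet_Ioi fun t ht => ?_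
        have hφ := mul_le_mul_of_nonneg_left (htail t (le_of_lt ht))
          (mul_nonneg (sub_pos.2 hδ).le (exp_pos (-δP * t)).le)
        have he : exp (-δP * t) * exp (δA * t) = exp ((δA - δP) * t) := by
          rw [← exp_add]; ring_nf
        rw [htail_eq] at hφ
        rw [hexpf_eq]
        linear_combination hφ - (δA - δP) * c * H t * he
    _ = c * ∫ s in Ioi 0, f s := by
        rw [integral_const_mul, integral_sub hexpf (hexpH.const_mul _), integral_const_mul,
          integral_exp_mul_integral_Ioi (sub_pos.2 hδ) (by linarith) (by fun_prop) hfK]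
        ring
    _ ≤ φ 0 := by
        have h0 := htail 0 le_rfl
        rwa [htail_eq, mul_zero, exp_zero, one_mul] at h0

lemma ConvexOn.add_mul_sub_le_of_hasDerivWithinAt {S : Set ℝ} {f : ℝ → ℝ} {x y f' : ℝ}
    (hf : ConvexOn ℝ S f) (hx : x ∈ S) (hy : y ∈ S) (hf' : HasDerivWithinAt f f' S x) :
    f x + f' * (y - x) ≤ f y := by
  rcases lt_trichotomy y x with hyx | rfl | hxy
  · have h := hf.slope_le_of_hasDerivWithinAt hy hx hyx hf'
    rw [slope_def_field, div_le_iff₀ (sub_pos.2 hyx)] at h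
    linarith
  · simp
  · have h := hf.le_slope_of_hasDerivWithinAt hx hy hxy hf'
    rw [slope_def_field, le_div_iff₀ (sub_pos.2 hxy)] at h
    linarith

lemma StrictConvexOn.lt_right_of_eq {f : ℝ → ℝ} {a b x : ℝ}
    (hf : StrictConvexOn ℝ (Icc a b) f) (hab : f a = f b) (hx : x ∈ Ioo a b) : f x < f b := by
  have hlt : a < b := hx.1.trans hx.2
  simpa [hab] using hf.lt_on_openSegment (left_mem_Icc.2 hlt.le) (right_mem_Icc.2 hlt.le)
    hlt.ne (by rwa [openSegment_eq_Ioo hlt])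

lemma AntitoneOn.comp_max_Ici {α β : Type*} [LinearOrder α] [Preorder β] {G : α → β} {a : α}
    (h : AntitoneOn G (Ici a)) : Antitone fun t => G (max t a) :=
  fun s t hst => h (le_max_right s a) (le_max_right t a) (max_le_max_right a hst)

lemma Feasible.obedience_le_affine {v : ℝ → ℝ} {δA ℓ μP a d t : ℝ} {G1 G0 : ℝ → ℝ}
    (hF : Feasible v δA ℓ μP G1 G0) (hℓ : 0 < ℓ) (hT : ∀ x ∈ Icc (0:ℝ) 1, a + d * x ≤ v x)
    (ht : 0 ≤ t) :
    δA * v 1 * ∫ s in Ioi t, (ℓ * G1 s + G0 s) * exp (-δA * (s - t))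
      ≤ (v 1 - a - d) * (ℓ * G1 t) + (v 1 - a) * G0 t := by
  obtain ⟨h1n, h0n, h1m, h0m, -, -, hob⟩ := hF
  have hℓG1 : 0 ≤ ℓ * G1 t := mul_nonneg hℓ.le (h1n t ht)
  rcases (add_nonneg hℓG1 (h0n t ht)).eq_or_lt with hzero | hpos
  · have h1 : G1 t = 0 := by nlinarith [h0n t ht, h1n t ht]
    have h0 : G0 t = 0 := by linarith [h0n t ht]
    have hvanish : ∀ s ∈ Ioi t, (ℓ * G1 s + G0 s) * exp (-δA * (s - t)) = 0 := by
      intro s hs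
      have hs' : t ≤ s := le_of_lt hs
      rw [le_antisymm (h1 ▸ h1m t s ht hs') (h1n s (ht.trans hs')),
        le_antisymm (h0 ▸ h0m t s ht hs') (h0n s (ht.trans hs'))]
      ring
    rw [setIntegral_congr_fun measurableSet_Ioi hvanish, h1, h0]
    simp
  · set x := ℓ * G1 t / (ℓ * G1 t + G0 t)
    have hx : x ∈ Icc (0:ℝ) 1 :=
      ⟨div_nonneg hℓG1 hpos.le, (div_le_one hpos).2 (by linarith [h0n t ht])⟩
    have hgx : (ℓ * G1 t + G0 t) * (a + d * x) = a * (ℓ * G1 t + G0 t) + d * (ℓ * G1 t) := by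
      rw [mul_add, mul_left_comm, mul_div_cancel₀ _ hpos.ne']; ring
    have := mul_le_mul_of_nonneg_left (hT x hx) hpos.le
    linarith [hob t ht hpos]

theorem Feasible.mul_J_le {v : ℝ → ℝ} {δA δP ℓ μP a d : ℝ} {G1 G0 : ℝ → ℝ}
    (hF : Feasible v δA ℓ μP G1 G0) (hδP : 0 < δP) (hδ : δP < δA) (hℓ : 0 < ℓ)
    (hT : ∀ x ∈ Icc (0:ℝ) 1, a + d * x ≤ v x)
    (hbal : ℓ * (δA * v 1 - (δA - δP) * (v 1 - a - d)) = δA * v 1 - (δA - δP) * (v 1 - a)) :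
    (δA * v 1 - (δA - δP) * (v 1 - a)) * J δP G1 G0
      ≤ (v 1 - a - d) * (ℓ * μP) + (v 1 - a) * (1 - μP) := by
  -- Freezing `G1`, `G0` before time 0 makes them antitone on all of `ℝ`, hence measurable.
  set g1 : ℝ → ℝ := fun t => G1 (max t 0)
  set g0 : ℝ → ℝ := fun t => G0 (max t 0)
  set φ : ℝ → ℝ := fun t => (v 1 - a - d) * (ℓ * g1 t) + (v 1 - a) * g0 t
  have hg1_eq : ∀ t, 0 ≤ t → g1 t = G1 t := fun t ht => by simp [g1, max_eq_left ht]
  have hg0_eq : ∀ t, 0 ≤ t → g0 t = G0 t := fun t ht => by simp [g0, max_eq_left ht]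
  have htail : ∀ t, 0 ≤ t →
      δA * v 1 * ∫ s in Ioi t, (ℓ * g1 s + g0 s) * exp (-δA * (s - t)) ≤ φ t := by
    intro t ht
    rw [setIntegral_congr_fun measurableSet_Ioi fun s hs => by
      rw [hg1_eq s (ht.trans (le_of_lt hs)), hg0_eq s (ht.trans (le_of_lt hs))]]
    simpa only [φ, hg1_eq t ht, hg0_eq t ht] using hF.obedience_le_affine hℓ hT ht
  obtain ⟨h1n, h0n, h1m, h0m, h10, h00, -⟩ := hF
  have hg1 : Antitone g1 := AntitoneOn.comp_max_Ici fun s hs t _ hst => h1m s t hs hst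
  have hg0 : Antitone g0 := AntitoneOn.comp_max_Ici fun s hs t _ hst => h0m s t hs hst
  have hg1n : ∀ t, 0 ≤ g1 t := fun t => h1n _ (le_max_right t 0)
  have hg0n : ∀ t, 0 ≤ g0 t := fun t => h0n _ (le_max_right t 0)
  have hg1μ : ∀ t, g1 t ≤ μP := fun t => h10 ▸ h1m 0 _ le_rfl (le_max_right t 0)
  have hg0μ : ∀ t, g0 t ≤ 1 - μP := fun t => h00 ▸ h0m 0 _ le_rfl (le_max_right t 0)
  have hintegrand : ∀ t, exp (-δP * t) * (δA * v 1 * (ℓ * g1 t + g0 t) - (δA - δP) * φ t)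
      = (δA * v 1 - (δA - δP) * (v 1 - a)) * (exp (-δP * t) * (g1 t + g0 t)) := fun t => by
    linear_combination exp (-δP * t) * g1 t * hbal
  have hg1m := hg1.measurable
  have hg0m := hg0.measurable
  have hint : IntegrableOn (fun t => exp (-δP * t) * (g1 t + g0 t)) (Ioi 0) := by
    refine integrableOn_Ioi_of_abs_le_exp (C := 1) hδP (by fun_prop) (fun t => ?_) 0
    rw [abs_of_nonneg (mul_nonneg (exp_pos _).le (add_nonneg (hg1n t) (hg0n t))), mul_comm]
    exact mul_le_mul_of_nonneg_right (by linarith [hg1μ t, hg0μ t]) (exp_pos _).le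
  have key := integral_exp_mul_sub_le_of_tail_le (K := ℓ * μP + (1 - μP)) hδP hδ (by fun_prop)
    (fun t => add_nonneg (mul_nonneg hℓ.le (hg1n t)) (hg0n t))
    (fun t => add_le_add (mul_le_mul_of_nonneg_left (hg1μ t) hℓ.le) (hg0μ t))
    (by simp only [hintegrand]; exact hint.const_mul _) htail
  simp only [hintegrand, integral_const_mul] at key
  calc (δA * v 1 - (δA - δP) * (v 1 - a)) * J δP G1 G0
      = (δA * v 1 - (δA - δP) * (v 1 - a)) * ∫ t in Ioi 0, exp (-δP * t) * (g1 t + g0 t) := by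
        rw [J, setIntegral_congr_fun measurableSet_Ioi fun t ht => by
          rw [← hg1_eq t (le_of_lt ht), ← hg0_eq t (le_of_lt ht)]]
    _ ≤ φ 0 := key
    _ = _ := by simp only [φ, g1, g0, max_self, h10, h00]

lemma J_of_exp {δP lam p q : ℝ} {G1 G0 : ℝ → ℝ} (hG1 : ∀ t, G1 t = p * exp (-lam * t))
    (hG0 : ∀ t, G0 t = q * exp (-lam * t)) (h : 0 < δP + lam) :
    J δP G1 G0 = (p + q) / (δP + lam) := by
  have hrw : ∀ t, exp (-δP * t) * (G1 t + G0 t) = (p + q) * exp (-(δP + lam) * t) := fun t => by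
    rw [hG1, hG0, show -(δP + lam) * t = -δP * t + -lam * t by ring, exp_add]
    ring
  simp only [J, hrw, integral_const_mul, integral_Ioi_exp_neg_mul h, mul_zero, exp_zero]
  ring

lemma obedience_eq_of_exp {v : ℝ → ℝ} {δA ℓ lam p q μ : ℝ} {G1 G0 : ℝ → ℝ}
    (hG1 : ∀ t, G1 t = p * exp (-lam * t)) (hG0 : ∀ t, G0 t = q * exp (-lam * t))
    (hlam : 0 < lam + δA) (hpq : 0 < ℓ * p + q) (hμ : ℓ * p = μ * (ℓ * p + q))
    (hv : lam * v 1 = (lam + δA) * v μ) (t : ℝ) :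
    v 1 * (ℓ * G1 t + G0 t) - δA * v 1 * ∫ s in Ioi t, (ℓ * G1 s + G0 s) * exp (-δA * (s - t))
      = (ℓ * G1 t + G0 t) * v (ℓ * G1 t / (ℓ * G1 t + G0 t)) := by
  have hsum : ∀ s, ℓ * G1 s + G0 s = (ℓ * p + q) * exp (-lam * s) := fun s => by
    rw [hG1, hG0]; ring
  have hratio : ℓ * G1 t / (ℓ * G1 t + G0 t) = μ := by
    rw [hsum, hG1, ← mul_assoc, div_eq_iff (by positivity)]
    linear_combination exp (-lam * t) * hμ
  rw [hratio]
  simp only [hsum, integral_Ioi_exp_neg_mul_mul_exp_sub hlam]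
  field_simp
  linear_combination hv

lemma feasible_of_exp {v : ℝ → ℝ} {δA ℓ μP lam : ℝ} {G1 G0 : ℝ → ℝ}
    (hG1 : ∀ t, G1 t = μP * exp (-lam * t)) (hG0 : ∀ t, G0 t = (1 - μP) * exp (-lam * t))
    (hμP : μP ∈ Icc (0:ℝ) 1) (hlam : 0 ≤ lam)
    (hob : ∀ t, 0 ≤ t →
      v 1 * (ℓ * G1 t + G0 t) - δA * v 1 * ∫ s in Ioi t, (ℓ * G1 s + G0 s) * exp (-δA * (s - t))
        = (ℓ * G1 t + G0 t) * v (ℓ * G1 t / (ℓ * G1 t + G0 t))) :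
    Feasible v δA ℓ μP G1 G0 := by
  have hexp : Antitone fun t => exp (-lam * t) := fun s t hst => exp_le_exp.2 (by nlinarith)
  have hμP' : 0 ≤ 1 - μP := sub_nonneg.2 hμP.2
  refine ⟨fun t _ => ?_, fun t _ => ?_, fun s t _ hst => ?_, fun s t _ hst => ?_, ?_, ?_,
    fun t ht _ => (hob t ht).ge⟩
  · rw [hG1]; exact mul_nonneg hμP.1 (exp_pos _).le
  · rw [hG0]; exact mul_nonneg hμP' (exp_pos _).le
  · rw [hG1, hG1]; exact mul_le_mul_of_nonneg_left (hexp hst) hμP.1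
  · rw [hG0, hG0]; exact mul_le_mul_of_nonneg_left (hexp hst) hμP'
  · simp [hG1]
  · simp [hG0]

section SteadyState

variable {δA δP μA μP ℓ lam v1 vA d : ℝ}

lemma steadyState_identity (hγ : 0 < δA - δP) (hE : 0 < δP * v1 + (δA - δP) * vA)
    (hμP : μP = μA + μA * (1 - μA) * d / (vA + (δP / (δA - δP)) * v1)) :
    (μP - μA) * (δP * v1 + (δA - δP) * vA) = (δA - δP) * (μA * (1 - μA) * d) := by
  have hden : vA + (δP / (δA - δP)) * v1 = (δP * v1 + (δA - δP) * vA) / (δA - δP) := by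
    field_simp
    ring
  rw [hμP, hden, add_sub_cancel_left, div_div_eq_mul_div, div_mul_cancel₀ _ hE.ne']
  ring

lemma steadyState_balance (hμA : μA ≠ 1) (hμP : μP ≠ 0)
    (hℓ : ℓ * ((1 - μA) * μP) = μA * (1 - μP))
    (hss : (μP - μA) * (δP * v1 + (δA - δP) * vA) = (δA - δP) * (μA * (1 - μA) * d)) :
    ℓ * (δA * v1 - (δA - δP) * (v1 - (vA - d * μA) - d))
      = δA * v1 - (δA - δP) * (v1 - (vA - d * μA)) := by
  refine mul_right_cancel₀ (mul_ne_zero (sub_ne_zero.2 hμA.symm) hμP) ?_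
  linear_combination (δP * v1 + (δA - δP) * vA + (δA - δP) * (1 - μA) * d) * hℓ - hss

lemma steadyState_denom_pos (hγ : 0 < δA - δP) (hμA : μA ∈ Ioo (0:ℝ) 1) (hℓ : 0 < ℓ)
    (hE : 0 < δP * v1 + (δA - δP) * vA)
    (hbal : ℓ * (δA * v1 - (δA - δP) * (v1 - (vA - d * μA) - d))
      = δA * v1 - (δA - δP) * (v1 - (vA - d * μA))) :
    0 < δA * v1 - (δA - δP) * (v1 - (vA - d * μA)) := by
  rcases le_or_gt 0 d with hd | hd
  · rw [← hbal]
    exact mul_pos hℓ (by nlinarith [mul_nonneg (mul_nonneg hγ.le (sub_pos.2 hμA.2).le) hd])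
  · nlinarith [mul_pos (mul_pos hγ hμA.1) (neg_pos.2 hd)]

lemma steadyState_value (hμA : μA ≠ 1) (h : δP + lam ≠ 0)
    (hℓ : ℓ * ((1 - μA) * μP) = μA * (1 - μP))
    (hss : (μP - μA) * (δP * v1 + (δA - δP) * vA) = (δA - δP) * (μA * (1 - μA) * d))
    (hlam : lam * (v1 - vA) = δA * vA) :
    (v1 - (vA - d * μA) - d) * (ℓ * μP) + (v1 - (vA - d * μA)) * (1 - μP)
      = (δA * v1 - (δA - δP) * (v1 - (vA - d * μA))) / (δP + lam) := by
  rw [eq_div_iff h]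
  refine mul_right_cancel₀ (sub_ne_zero.2 hμA.symm) ?_
  linear_combination (δP + lam) * (v1 - vA - (1 - μA) * d) * hℓ + (1 - μP) * hlam - hss

end SteadyState

/-- **Stationary symmetric Poisson revelation is optimal at the steady-state belief
pair.** If `δA > δP > 0` and `μP = μA + μA(1-μA) v'(μA)/(v(μA) + (δP/(δA-δP)) v(1))`,
then revealing both states at the constant Poisson rate `λ = δA v(μA)/(v(1)-v(μA))`
(so `G₁*(t) = μP e^{-λt}`, `G₀*(t) = (1-μP) e^{-λt}`) is feasible, satisfies the
obedience constraint with equality at every `t ≥ 0`, and is optimal. -/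
theorem stationary_poisson_optimal
    (v v' : ℝ → ℝ) (δA δP μA μP : ℝ)
    (hδP : 0 < δP) (hδ : δP < δA)
    (hμA : μA ∈ Ioo (0:ℝ) 1)
    (hconv : StrictConvexOn ℝ (Icc (0:ℝ) 1) v)
    (hderiv : ∀ x ∈ Icc (0:ℝ) 1, HasDerivWithinAt v (v' x) (Icc (0:ℝ) 1) x)
    (hpos : ∀ x ∈ Icc (0:ℝ) 1, 0 < v x)
    (hsymm : ∀ x ∈ Icc (0:ℝ) 1, v x = v (1 - x))
    (hμP : μP = μA + μA * (1 - μA) * v' μA / (v μA + (δP / (δA - δP)) * v 1))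
    (hμP01 : μP ∈ Ioo (0:ℝ) 1) :
    let ℓ : ℝ := μA * (1 - μP) / ((1 - μA) * μP)
    let lam : ℝ := δA * v μA / (v 1 - v μA)
    let G1s : ℝ → ℝ := fun t => μP * Real.exp (-lam * t)
    let G0s : ℝ → ℝ := fun t => (1 - μP) * Real.exp (-lam * t)
    Feasible v δA ℓ μP G1s G0s ∧
    (∀ t : ℝ, 0 ≤ t →
      v 1 * (ℓ * G1s t + G0s t)
          - δA * v 1 * ∫ s in Ioi t, (ℓ * G1s s + G0s s) * Real.exp (-δA * (s - t))
        = (ℓ * G1s t + G0s t) * v (ℓ * G1s t / (ℓ * G1s t + G0s t))) ∧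
    ∀ G1 G0, Feasible v δA ℓ μP G1 G0 → J δP G1 G0 ≤ J δP G1s G0s := by
  intro ℓ lam G1s G0s
  have hμA01 : μA ∈ Icc (0:ℝ) 1 := Ioo_subset_Icc_self hμA
  have hv1 := hpos 1 (right_mem_Icc.2 zero_le_one)
  have hvA := hpos μA hμA01
  have hgap : v μA < v 1 :=
    hconv.lt_right_of_eq (by simpa using hsymm 0 (left_mem_Icc.2 zero_le_one)) hμA
  have hγ : 0 < δA - δP := sub_pos.2 hδ
  have hlam : lam * (v 1 - v μA) = δA * v μA := div_mul_cancel₀ _ (sub_pos.2 hgap).ne'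
  have hlam0 : 0 < lam := div_pos (mul_pos (hδP.trans hδ) hvA) (sub_pos.2 hgap)
  have hℓ : ℓ * ((1 - μA) * μP) = μA * (1 - μP) :=
    div_mul_cancel₀ _ (mul_pos (sub_pos.2 hμA.2) hμP01.1).ne'
  have hℓ0 : 0 < ℓ :=
    div_pos (mul_pos hμA.1 (sub_pos.2 hμP01.2)) (mul_pos (sub_pos.2 hμA.2) hμP01.1)
  have hE : 0 < δP * v 1 + (δA - δP) * v μA := by positivity
  have hss := steadyState_identity hγ hE hμP
  have hbal := steadyState_balance hμA.2.ne hμP01.1.ne' hℓ hss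
  have hobeq := fun t (_ : 0 ≤ t) =>
    obedience_eq_of_exp (G1 := G1s) (G0 := G0s) (v := v) (δA := δA) (fun _ => rfl) (fun _ => rfl)
      (by linarith) (add_pos (mul_pos hℓ0 hμP01.1) (sub_pos.2 hμP01.2))
      (by linear_combination hℓ) (by linear_combination hlam) t
  refine ⟨feasible_of_exp (fun _ => rfl) (fun _ => rfl) (Ioo_subset_Icc_self hμP01) hlam0.le
    hobeq, hobeq, fun G1 G0 hF => ?_⟩
  have hT : ∀ x ∈ Icc (0:ℝ) 1, (v μA - v' μA * μA) + v' μA * x ≤ v x := fun x hx => by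
    linarith [hconv.convexOn.add_mul_sub_le_of_hasDerivWithinAt hμA01 hx (hderiv μA hμA01)]
  rw [J_of_exp (fun _ => rfl) (fun _ => rfl) (by linarith), add_sub_cancel]
  refine le_of_mul_le_mul_left ?_ (steadyState_denom_pos hγ hμA hℓ0 hE hbal)
  calc _ ≤ _ := hF.mul_J_le hδP hδ hℓ0 hT hbal
    _ = _ := (steadyState_value hμA.2.ne (by linarith) hℓ hss hlam).trans
      (div_eq_mul_one_div _ _)

end
end

section
/- No interior steady-state belief under extreme bias: assume δ_A > δ_P > 0 and δ_A·v(0) + (δ_A-δ_P)·v'(0) > 0, where v'(0) is the one-sided derivative at 0. Then for every μ ∈ (0,1): δ_A·v(1) - (δ_A-δ_P)·Δ_1(μ) ≥ δ_A·v(0) + (δ_A-δ_P)·v'(0) > 0, and (δ_A·v(1) - (δ_A-δ_P)·Δ_0(μ)) / (δ_A·v(1) - (δ_A-δ_P)·Δ_1(μ)) > 1 + (δ_A-δ_P)·v'(0)/(δ_A·v(0)). Consequently, for any ℓ ≤ 1 + (δ_A-δ_P)·v'(0)/(δ_A·v(0)), the steady-state equation ℓ = (δ_A·v(1) - (δ_A-δ_P)·Δ_0(μ))/(δ_A·v(1)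 - (δ_A-δ_P)·Δ_1(μ)) has no solution μ ∈ (0,1). -/
open Set

noncomputable section

/-- **No interior steady-state belief under extreme bias.** Assume `δA > δP > 0` and
`δA v(0) + (δA - δP) v'(0) > 0`. Then for every `μ ∈ (0,1)` the denominator
`δA v(1) - (δA-δP) Δ₁(μ)` is bounded below by `δA v(0) + (δA-δP) v'(0) > 0`, and the
steady-state ratio exceeds `1 + (δA-δP) v'(0)/(δA v(0))`; consequently, for any
`ℓ ≤ 1 + (δA-δP) v'(0)/(δA v(0))` the steady-state equation has no solution in `(0,1)`. -/
theorem no_interior_steady_state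
    (v v' : ℝ → ℝ) (δA δP : ℝ)
    (hδP : 0 < δP) (hδ : δP < δA)
    (hconv : StrictConvexOn ℝ (Icc (0:ℝ) 1) v)
    (hderiv : ∀ x ∈ Icc (0:ℝ) 1, HasDerivWithinAt v (v' x) (Icc (0:ℝ) 1) x)
    (hpos : ∀ x ∈ Icc (0:ℝ) 1, 0 < v x)
    (hsymm : ∀ x ∈ Icc (0:ℝ) 1, v x = v (1 - x))
    (hbias : 0 < δA * v 0 + (δA - δP) * v' 0) :
    (∀ μ ∈ Ioo (0:ℝ) 1,
      δA * v 0 + (δA - δP) * v' 0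
          ≤ δA * v 1 - (δA - δP) * (v 1 - v μ - (1 - μ) * v' μ) ∧
      0 < δA * v 1 - (δA - δP) * (v 1 - v μ - (1 - μ) * v' μ) ∧
      1 + (δA - δP) * v' 0 / (δA * v 0)
        < (δA * v 1 - (δA - δP) * (v 1 - v μ + μ * v' μ))
            / (δA * v 1 - (δA - δP) * (v 1 - v μ - (1 - μ) * v' μ))) ∧
    ∀ ℓ : ℝ, ℓ ≤ 1 + (δA - δP) * v' 0 / (δA * v 0) →
      ∀ μ ∈ Ioo (0:ℝ) 1,
        ℓ ≠ (δA * v 1 - (δA - δP) * (v 1 - v μ + μ * v' μ))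
              / (δA * v 1 - (δA - δP) * (v 1 - v μ - (1 - μ) * v' μ)) := by
  have h0mem : (0:ℝ) ∈ Icc (0:ℝ) 1 := ⟨le_refl 0, zero_le_one⟩
  have h1mem : (1:ℝ) ∈ Icc (0:ℝ) 1 := ⟨zero_le_one, le_refl 1⟩
  have hcv : ConvexOn ℝ (Icc (0:ℝ) 1) v := hconv.convexOn
  have hv01 : v 0 = v 1 := by simpa using hsymm 0 h0mem
  -- v' 0 = -(v' 1)
  have hd0 : v' 0 = -(v' 1) := by
    have hmap : MapsTo (fun x : ℝ => 1 - x) (Icc (0:ℝ) 1) (Icc (0:ℝ) 1) := by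
      intro x hx
      simp only [mem_Icc] at hx ⊢
      constructor <;> linarith [hx.1, hx.2]
    have hid : HasDerivWithinAt (fun x : ℝ => 1 - x) (-1) (Icc (0:ℝ) 1) 0 := by
      simpa using ((hasDerivWithinAt_id (0:ℝ) (Icc (0:ℝ) 1)).const_sub (1:ℝ))
    have hg : HasDerivWithinAt v (v' 1) (Icc (0:ℝ) 1) (1 - (0:ℝ)) := by
      norm_num; exact hderiv 1 h1mem
    have hcomp : HasDerivWithinAt (fun x : ℝ => v (1 - x)) (v' 1 * (-1)) (Icc (0:ℝ) 1) 0 :=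
      HasDerivWithinAt.comp 0 hg hid hmap
    have hv2 : HasDerivWithinAt v (v' 1 * (-1)) (Icc (0:ℝ) 1) 0 :=
      hcomp.congr (fun x hx => hsymm x hx) (hsymm 0 h0mem)
    have hud : UniqueDiffWithinAt ℝ (Icc (0:ℝ) 1) 0 :=
      (uniqueDiffOn_Icc (by norm_num : (0:ℝ) < 1)) 0 h0mem
    have e1 := (hderiv 0 h0mem).derivWithin hud
    have e2 := hv2.derivWithin hud
    rw [e1] at e2; linarith [e2]
  have hD : 0 < δA - δP := by linarith
  have hδA : 0 < δA := lt_trans hδP hδ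
  have hv0 : 0 < v 0 := hpos 0 h0mem
  have key : ∀ μ ∈ Ioo (0:ℝ) 1,
      δA * v 0 + (δA - δP) * v' 0
          ≤ δA * v 1 - (δA - δP) * (v 1 - v μ - (1 - μ) * v' μ) ∧
      0 < δA * v 1 - (δA - δP) * (v 1 - v μ - (1 - μ) * v' μ) ∧
      1 + (δA - δP) * v' 0 / (δA * v 0)
        < (δA * v 1 - (δA - δP) * (v 1 - v μ + μ * v' μ))
            / (δA * v 1 - (δA - δP) * (v 1 - v μ - (1 - μ) * v' μ)) := by
    intro μ hμ
    obtain ⟨hμ0, hμ1⟩ := hμ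
    have hμmem : μ ∈ Icc (0:ℝ) 1 := ⟨hμ0.le, hμ1.le⟩
    -- tangent at 0
    have hA : v' 0 ≤ (v μ - v 0) / (μ - 0) := by
      have := hcv.le_slope_of_hasDerivWithinAt h0mem hμmem hμ0 (hderiv 0 h0mem)
      rwa [slope_def_field] at this
    have hA' : v 0 + μ * v' 0 ≤ v μ := by
      have h := (le_div_iff₀ (by linarith : (0:ℝ) < μ - 0)).mp hA
      nlinarith [h]
    -- tangent at 1
    have hB : (v 1 - v μ) / (1 - μ) ≤ v' 1 := by
      have := hcv.slope_le_of_hasDerivWithinAt hμmem h1mem hμ1 (hderiv 1 h1mem)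
      rwa [slope_def_field] at this
    have hB' : v 1 - v μ ≤ v' 1 * (1 - μ) :=
      (div_le_iff₀ (by linarith : (0:ℝ) < 1 - μ)).mp hB
    -- monotonicity of derivative
    have hC : v' 0 ≤ v' μ := by
      have h2 := hcv.slope_le_of_hasDerivWithinAt h0mem hμmem hμ0 (hderiv μ hμmem)
      rw [slope_def_field] at h2
      exact le_trans hA h2
    have hDlt : v' μ < v' 1 := by
      have h3 := hconv.lt_slope_of_hasDerivWithinAt hμmem h1mem hμ1 (hderiv μ hμmem)
      rw [slope_def_field] at h3
      exact lt_of_lt_of_le h3 hB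
    have hv1pos : 0 < v' 1 := by linarith [hC, hDlt, hd0]
    -- Δ₁ ≤ v' 1
    have hΔ1 : v 1 - v μ - (1 - μ) * v' μ ≤ v' 1 := by
      nlinarith [hA', mul_le_mul_of_nonneg_left hC (by linarith : (0:ℝ) ≤ 1 - μ), hd0, hv01]
    have part1 : δA * v 0 + (δA - δP) * v' 0
        ≤ δA * v 1 - (δA - δP) * (v 1 - v μ - (1 - μ) * v' μ) := by
      have := mul_le_mul_of_nonneg_left hΔ1 hD.le
      nlinarith [this, hd0, hv01]
    have part2 : 0 < δA * v 1 - (δA - δP) * (v 1 - v μ - (1 - μ) * v' μ) :=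
      lt_of_lt_of_le hbias part1
    refine ⟨part1, part2, ?_⟩
    -- Δ₁ ≤ v' 1 - v' μ
    have hΔ1' : v 1 - v μ - (1 - μ) * v' μ ≤ v' 1 - v' μ := by
      nlinarith [hB', mul_nonneg hμ0.le (sub_nonneg.mpr hDlt.le)]
    have hbias' : (δA - δP) * v' 1 < δA * v 1 := by nlinarith [hbias, hd0, hv01]
    have hpos' : (0:ℝ) < v' 1 - v' μ := by linarith
    have e1 : (δA - δP) * v' 1 * (v 1 - v μ - (1 - μ) * v' μ)
        ≤ (δA - δP) * v' 1 * (v' 1 - v' μ) :=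
      mul_le_mul_of_nonneg_left hΔ1' (by positivity)
    have e2 : (δA - δP) * v' 1 * (v' 1 - v' μ) < δA * v 1 * (v' 1 - v' μ) :=
      mul_lt_mul_of_pos_right hbias' hpos'
    have hcross : (δA * v 0 + (δA - δP) * v' 0) *
          (δA * v 1 - (δA - δP) * (v 1 - v μ - (1 - μ) * v' μ))
        < (δA * v 1 - (δA - δP) * (v 1 - v μ + μ * v' μ)) * (δA * v 0) := by
      rw [hv01, hd0]
      nlinarith [e1, e2]
    have heq : 1 + (δA - δP) * v' 0 / (δA * v 0)
        = (δA * v 0 + (δA - δP) * v' 0) / (δA * v 0) := by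
      field_simp
    rw [heq, div_lt_div_iff₀ (by positivity) part2]
    exact hcross
  refine ⟨key, ?_⟩
  intro ℓ hℓ μ hμ
  exact ne_of_lt (lt_of_le_of_lt hℓ (key μ hμ).2.2)

end
end

section
/- Monotonicity of the steady-state belief map: let v : [0,1] → ℝ be strictly convex, twice differentiable, positive, and symmetric (v(x) = v(1-x) for all x), let δ_A > δ_P > 0, and define φ(x) = x + x(1-x)·v'(x)/(v(x) + (δ_P/(δ_A-δ_P))·v(1)). Then for every x ∈ (0,1/2) with φ(x) > 0 one has φ'(x) > 0, and for every x ∈ (1/2,1) with φ(x) < 1 one has φ'(x) > 0. -/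
open Set

noncomputable section

private lemma deriv_phi_aux (v : ℝ → ℝ) (c x : ℝ)
    (h1 : DifferentiableAt ℝ v x) (h2 : DifferentiableAt ℝ (deriv v) x)
    (hd : v x + c * v 1 ≠ 0) :
    deriv (fun y => y + y * (1 - y) * deriv v y / (v y + c * v 1)) x =
      1 + ((((1 - x) - x) * deriv v x + x * (1 - x) * deriv (deriv v) x) * (v x + c * v 1)
        - x * (1 - x) * deriv v x * deriv v x) / (v x + c * v 1) ^ 2 := by
  have hnum : HasDerivAt (fun y => y * (1 - y) * deriv v y)
      ((1 * (1 - x) + x * (0 - 1)) * deriv v x + x * (1 - x) * deriv (deriv v) x) x :=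
    ((hasDerivAt_id x).mul ((hasDerivAt_const x (1:ℝ)).sub (hasDerivAt_id x))).mul h2.hasDerivAt
  have hden : HasDerivAt (fun y => v y + c * v 1) (deriv v x) x := h1.hasDerivAt.add_const _
  have h := ((hasDerivAt_id x).add (hnum.div hden hd)).deriv
  refine Eq.trans ?_ (by ring :
    (1 : ℝ) + (((1 * (1 - x) + x * (0 - 1)) * deriv v x + x * (1 - x) * deriv (deriv v) x)
        * (v x + c * v 1) - x * (1 - x) * deriv v x * deriv v x) / (v x + c * v 1) ^ 2 =
      1 + ((((1 - x) - x) * deriv v x + x * (1 - x) * deriv (deriv v) x) * (v x + c * v 1)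
        - x * (1 - x) * deriv v x * deriv v x) / (v x + c * v 1) ^ 2)
  exact h

/-- **Monotonicity of the steady-state belief map.** If `v` is strictly convex, twice
differentiable, positive and symmetric about `1/2`, and `δA > δP > 0`, then the
steady-state map `φ(x) = x + x(1-x) v'(x)/(v(x) + (δP/(δA-δP)) v(1))` is strictly
increasing wherever its value is interior: `φ'(x) > 0` for `x ∈ (0,1/2)` with
`φ(x) > 0`, and `φ'(x) > 0` for `x ∈ (1/2,1)` with `φ(x) < 1`. -/
theorem steady_state_map_monotone
    (v : ℝ → ℝ) (δA δP : ℝ)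
    (hδP : 0 < δP) (hδ : δP < δA)
    (hconv : StrictConvexOn ℝ (Icc (0:ℝ) 1) v)
    (hd1 : ∀ x ∈ Icc (0:ℝ) 1, DifferentiableAt ℝ v x)
    (hd2 : ∀ x ∈ Icc (0:ℝ) 1, DifferentiableAt ℝ (deriv v) x)
    (hpos : ∀ x ∈ Icc (0:ℝ) 1, 0 < v x)
    (hsymm : ∀ x ∈ Icc (0:ℝ) 1, v x = v (1 - x)) :
    let φ : ℝ → ℝ := fun x =>
      x + x * (1 - x) * deriv v x / (v x + (δP / (δA - δP)) * v 1)
    (∀ x ∈ Ioo (0:ℝ) (1/2), 0 < φ x → 0 < deriv φ x) ∧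
    (∀ x ∈ Ioo (1/2 : ℝ) 1, φ x < 1 → 0 < deriv φ x) := by
  intro φ
  set c : ℝ := δP / (δA - δP) with hc_def
  have hc : 0 < c := div_pos hδP (sub_pos.2 hδ)
  have hv1 : 0 < v 1 := hpos 1 (by norm_num)
  have hmono : StrictMonoOn (deriv v) (Icc (0:ℝ) 1) := hconv.strictMonoOn_deriv hd1
  have hhalf : (1/2 : ℝ) ∈ Icc (0:ℝ) 1 := by norm_num
  -- deriv v (1/2) = 0
  have hder0 : deriv v (1/2 : ℝ) = 0 := by
    have hev : v =ᶠ[nhds (1/2 : ℝ)] (fun y => v (1 - y)) := by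
      filter_upwards [Ioo_mem_nhds (show (0:ℝ) < 1/2 by norm_num)
        (show (1/2 : ℝ) < 1 by norm_num)] with y hy
      exact hsymm y (Ioo_subset_Icc_self hy)
    have hg : HasDerivAt (fun y => v (1 - y)) (deriv v (1 - (1/2:ℝ)) * (0 - 1)) (1/2 : ℝ) :=
      (hd1 (1 - (1/2:ℝ)) (by norm_num)).hasDerivAt.comp (1/2 : ℝ)
        ((hasDerivAt_const _ (1:ℝ)).sub (hasDerivAt_id _))
    have h1 : deriv v (1/2 : ℝ) = deriv (fun y => v (1 - y)) (1/2 : ℝ) := hev.deriv_eq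
    rw [hg.deriv] at h1
    norm_num at h1
    linarith
  -- second derivative nonneg on the interior
  have hq : ∀ x ∈ Ioo (0:ℝ) 1, 0 ≤ deriv (deriv v) x := by
    intro x hx
    have hm : MonotoneOn (deriv v) (Icc (0:ℝ) 1) := hmono.monotoneOn
    have hder := (hd2 x (Ioo_subset_Icc_self hx)).hasDerivAt
    rw [hasDerivAt_iff_tendsto_slope] at hder
    refine ge_of_tendsto hder ?_
    filter_upwards [self_mem_nhdsWithin,
      mem_nhdsWithin_of_mem_nhds (Ioo_mem_nhds hx.1 hx.2)] with y hy1 hy2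
    have hyI : y ∈ Icc (0:ℝ) 1 := Ioo_subset_Icc_self hy2
    have hxI : x ∈ Icc (0:ℝ) 1 := Ioo_subset_Icc_self hx
    rw [slope_def_field]
    rcases lt_or_gt_of_ne (show y ≠ x from hy1) with h | h
    · have := hm hyI hxI h.le
      rw [div_nonneg_iff]; right; constructor <;> linarith
    · have := hm hxI hyI h.le
      apply div_nonneg <;> linarith
  constructor
  · intro x hx hφ
    have hxI : x ∈ Icc (0:ℝ) 1 := ⟨hx.1.le, by linarith [hx.2]⟩
    have hxO : x ∈ Ioo (0:ℝ) 1 := ⟨hx.1, by linarith [hx.2]⟩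
    set p := deriv v x with hp_def
    set q := deriv (deriv v) x with hq_def
    set d := v x + c * v 1 with hd_def
    have hd : 0 < d := by
      have := hpos x hxI
      have := mul_pos hc hv1
      simp only [hd_def]; linarith
    have hp : p < 0 := by
      have := hmono hxI hhalf hx.2
      rw [hder0] at this; exact this
    have hq' : 0 ≤ q := hq x hxO
    have hE := deriv_phi_aux v c x (hd1 x hxI) (hd2 x hxI) hd.ne'
    have hφx : (0:ℝ) < x + x * (1 - x) * p / d := hφ
    have hkey : 0 < d + (1 - x) * p := by
      have h1 : 0 < (x + x * (1 - x) * p / d) * d := mul_pos hφx hd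
      have h2 : (x + x * (1 - x) * p / d) * d = x * (d + (1 - x) * p) := by
        field_simp
      rw [h2] at h1
      nlinarith [h1, hx.1]
    have hkey2 : 0 < d - x * p := by nlinarith [hx.1, hp]
    rw [show deriv φ x = deriv (fun y => y + y * (1 - y) * deriv v y / (v y + c * v 1)) x from rfl,
      hE, ← hp_def, ← hq_def, ← hd_def]
    have hd2' : (0:ℝ) < d ^ 2 := pow_pos hd 2
    have gen : ∀ A : ℝ, 0 < d ^ 2 + A → 0 < 1 + A / d ^ 2 := by
      intro A hA
      have := div_pos hA hd2'
      rwa [add_div, div_self hd2'.ne'] at this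
    apply gen
    have hid : d ^ 2 + (((1 - x - x) * p + x * (1 - x) * q) * d - x * (1 - x) * p * p)
        = (d + (1 - x) * p) * (d - x * p) + x * (1 - x) * q * d := by ring
    rw [hid]
    have h1 := mul_pos hkey hkey2
    have h2 := mul_nonneg (mul_nonneg (mul_nonneg hx.1.le
      (by linarith [hx.2] : (0:ℝ) ≤ 1 - x)) hq') hd.le
    linarith
  · intro x hx hφ
    have hxI : x ∈ Icc (0:ℝ) 1 := ⟨by linarith [hx.1], hx.2.le⟩
    have hxO : x ∈ Ioo (0:ℝ) 1 := ⟨by linarith [hx.1], hx.2⟩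
    set p := deriv v x with hp_def
    set q := deriv (deriv v) x with hq_def
    set d := v x + c * v 1 with hd_def
    have hd : 0 < d := by
      have := hpos x hxI
      have := mul_pos hc hv1
      simp only [hd_def]; linarith
    have hp : 0 < p := by
      have := hmono hhalf hxI hx.1
      rw [hder0] at this; exact this
    have hq' : 0 ≤ q := hq x hxO
    have hE := deriv_phi_aux v c x (hd1 x hxI) (hd2 x hxI) hd.ne'
    have hφx : x + x * (1 - x) * p / d < 1 := hφ
    have hkey2 : 0 < d - x * p := by
      have h1 : (x + x * (1 - x) * p / d) * d < 1 * d := by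
        exact mul_lt_mul_of_pos_right hφx hd
      have h2 : (x + x * (1 - x) * p / d) * d = x * d + x * (1 - x) * p := by
        field_simp
      rw [h2, one_mul] at h1
      have h3 : (1 - x) * (x * p) < (1 - x) * d := by nlinarith
      have h1x : (0:ℝ) < 1 - x := by linarith [hx.2]
      nlinarith [mul_lt_mul_of_pos_left (show x * p < d from by nlinarith) h1x]
    have hkey : 0 < d + (1 - x) * p := by
      have h1x : (0:ℝ) < 1 - x := by linarith [hx.2]
      nlinarith
    rw [show deriv φ x = deriv (fun y => y + y * (1 - y) * deriv v y / (v y + c * v 1)) x from rfl,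
      hE, ← hp_def, ← hq_def, ← hd_def]
    have hd2' : (0:ℝ) < d ^ 2 := pow_pos hd 2
    have gen : ∀ A : ℝ, 0 < d ^ 2 + A → 0 < 1 + A / d ^ 2 := by
      intro A hA
      have := div_pos hA hd2'
      rwa [add_div, div_self hd2'.ne'] at this
    apply gen
    have hid : d ^ 2 + (((1 - x - x) * p + x * (1 - x) * q) * d - x * (1 - x) * p * p)
        = (d + (1 - x) * p) * (d - x * p) + x * (1 - x) * q * d := by ring
    rw [hid]
    have h1 := mul_pos hkey hkey2
    have h2 := mul_nonneg (mul_nonneg (mul_nonneg (by linarith [hx.1] : (0:ℝ) ≤ x)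
      (by linarith [hx.2] : (0:ℝ) ≤ 1 - x)) hq') hd.le
    linarith
end
end

section
/- Strict monotonicity of the steady-state ratio and uniqueness of the steady-state belief: let v : [0,1] → ℝ be strictly convex and differentiable, let δ_A > δ_P > 0, and define N(μ) = δ_A·v(1) - (δ_A-δ_P)·Δ_0(μ) and D(μ) = δ_A·v(1) - (δ_A-δ_P)·Δ_1(μ). Then N is strictly decreasing and D is strictly increasing on [0,1]. Consequently, on any subinterval of (0,1) on which N and D are both positive, the ratio R(μ) = N(μ)/D(μ) is strictly decreasing, and for every real ℓ the equation ℓ = R(μ) has at most one solution in that subinterval. -/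
open Set

noncomputable section

/-- **Strict monotonicity of the steady-state ratio and uniqueness of the steady-state
belief.** With `Δ₁ μ = v 1 - v μ - (1-μ) v' μ`, `Δ₀ μ = v 1 - v μ + μ v' μ`,
`N μ = δA v 1 - (δA-δP) Δ₀ μ` and `D μ = δA v 1 - (δA-δP) Δ₁ μ`: `N` is strictly
decreasing and `D` strictly increasing on `[0,1]`; hence on any subset of `(0,1)` where
both are positive the ratio `N/D` is strictly decreasing and the steady-state equation
`ℓ = N μ / D μ` has at most one solution. -/
theorem steady_state_ratio_monotone
    (v v' : ℝ → ℝ) (δA δP : ℝ)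
    (hδP : 0 < δP) (hδ : δP < δA)
    (hconv : StrictConvexOn ℝ (Icc (0:ℝ) 1) v)
    (hderiv : ∀ x ∈ Icc (0:ℝ) 1, HasDerivWithinAt v (v' x) (Icc (0:ℝ) 1) x) :
    let N : ℝ → ℝ := fun μ => δA * v 1 - (δA - δP) * (v 1 - v μ + μ * v' μ)
    let D : ℝ → ℝ := fun μ => δA * v 1 - (δA - δP) * (v 1 - v μ - (1 - μ) * v' μ)
    StrictAntiOn N (Icc (0:ℝ) 1) ∧
    StrictMonoOn D (Icc (0:ℝ) 1) ∧
    ∀ s : Set ℝ, s ⊆ Ioo (0:ℝ) 1 →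
      (∀ μ ∈ s, 0 < N μ) → (∀ μ ∈ s, 0 < D μ) →
      StrictAntiOn (fun μ => N μ / D μ) s ∧
      ∀ ℓ : ℝ, {μ ∈ s | ℓ = N μ / D μ}.Subsingleton := by
  intro N D
  have hc : (0:ℝ) < δA - δP := by linarith
  -- key inequalities for x < y in Icc 0 1
  have key : ∀ x ∈ Icc (0:ℝ) 1, ∀ y ∈ Icc (0:ℝ) 1, x < y →
      v' x * (y - x) < v y - v x ∧ v y - v x < v' y * (y - x) := by
    intro x hx y hy hxy
    have h1 := hconv.lt_slope_of_hasDerivWithinAt hx hy hxy (hderiv x hx)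
    have h2 := hconv.slope_lt_of_hasDerivWithinAt hx hy hxy (hderiv y hy)
    rw [slope_def_field] at h1 h2
    have hyx : (0:ℝ) < y - x := by linarith
    exact ⟨(lt_div_iff₀ hyx).mp h1, (div_lt_iff₀ hyx).mp h2⟩
  have hN : StrictAntiOn N (Icc (0:ℝ) 1) := by
    intro x hx y hy hxy
    have ⟨k1, k2⟩ := key x hx y hy hxy
    have hd : v' x < v' y := by
      nlinarith [sub_pos.mpr hxy]
    have hx0 : 0 ≤ x := hx.1
    -- Δ0 y - Δ0 x = -(v y - v x) + y v' y - x v' x > 0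
    have : 0 < -(v y - v x) + y * v' y - x * v' x := by nlinarith
    simp only [N]
    nlinarith
  have hD : StrictMonoOn D (Icc (0:ℝ) 1) := by
    intro x hx y hy hxy
    have ⟨k1, k2⟩ := key x hx y hy hxy
    have hd : v' x < v' y := by
      nlinarith [sub_pos.mpr hxy]
    have hy1 : y ≤ 1 := hy.2
    -- Δ1 x - Δ1 y > 0
    have : 0 < (v y - v x) + (1 - y) * v' y - (1 - x) * v' x := by nlinarith
    simp only [D]
    nlinarith
  refine ⟨hN, hD, fun s hs hNpos hDpos => ?_⟩
  have hsub : s ⊆ Icc (0:ℝ) 1 := hs.trans Ioo_subset_Icc_self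
  have hanti : StrictAntiOn (fun μ => N μ / D μ) s := by
    intro x hx y hy hxy
    have h1 := hN (hsub hx) (hsub hy) hxy
    have h2 := hD (hsub hx) (hsub hy) hxy
    have hNx := hNpos x hx
    have hDx := hDpos x hx
    have hDy := hDpos y hy
    simp only
    rw [div_lt_div_iff₀ hDy hDx]
    nlinarith
  refine ⟨hanti, fun ℓ x hx y hy => ?_⟩
  obtain ⟨hxs, hxe⟩ := hx
  obtain ⟨hys, hye⟩ := hy
  by_contra hne
  rcases lt_or_gt_of_ne hne with h | h
  · have := hanti hxs hys h
    simp only at this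
    rw [← hxe, ← hye] at this
    exact lt_irrefl _ this
  · have := hanti hys hxs h
    simp only at this
    rw [← hxe, ← hye] at this
    exact lt_irrefl _ this

end
end

section
/- Optimal revelation time in the simple example with an undiscounted principal: let δ > 0 and let ν be a Borel probability measure on [0,∞) such that for every t ≥ 0, ∫_{(t,∞)} e^{-δs} dν(s) ≥ (1/2)·e^{-δt}·ν((t,∞)). Then ∫_{[0,∞)} s dν(s) ≤ 1/δ. Moreover, the exponential distribution with rate δ (the measure with density s ↦ δ·e^{-δs} on [0,∞)) satisfies every one of these constraints with equality and attains ∫ s dν(s) = 1/δ. -/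
/-!
Multiply the obedience constraint at `t` by `δ e^{δt}` and integrate over `t > 0`: by the layer-cake
formula the left side becomes `(δ/2) 𝔼T`, and by Tonelli the right side becomes `𝔼[1 - e^{-δT}]`.
Adding the constraint at `t = 0`, `ν(T > 0) / 2 ≤ 𝔼[e^{-δT}; T > 0]`, gives
`(δ/2) 𝔼T ≤ ν(T > 0) / 2 ≤ 1/2`. For the exponential law of rate `δ`, reweighting by `e^{-δs}`
gives half the exponential law of rate `2δ`, which makes every constraint bind.
-/

open MeasureTheory Set ProbabilityTheory ENNReal

lemma setIntegral_eq_toReal_withDensity {α : Type*} [MeasurableSpace α] {μ : Measure α}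
    {f : α → ℝ} {s : Set α} (hs : MeasurableSet s) (hf : 0 ≤ᵐ[μ.restrict s] f)
    (hfm : AEStronglyMeasurable f (μ.restrict s)) :
    ∫ x in s, f x ∂μ = (μ.withDensity (fun x => ENNReal.ofReal (f x)) s).toReal := by
  rw [integral_eq_lintegral_of_nonneg_ae hf hfm, withDensity_apply _ hs]

lemma ae_nonneg_of_measure_Iio_zero {ν : Measure ℝ} (hν : ν (Iio 0) = 0) : 0 ≤ᵐ[ν] id :=
  ae_iff.2 (by simp only [Pi.zero_apply, id, not_le]; exact hν)

lemma lintegral_ofReal_eq_lintegral_measure_Ioi {ν : Measure ℝ} (hν : ν (Iio 0) = 0) :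
    ∫⁻ s, ENNReal.ofReal s ∂ν = ∫⁻ t in Ioi 0, ν (Ioi t) :=
  lintegral_eq_lintegral_meas_lt ν (ae_nonneg_of_measure_Iio_zero hν) aemeasurable_id

lemma integral_mul_exp_mul (δ s : ℝ) :
    ∫ t in (0)..s, δ * Real.exp (δ * t) = Real.exp (δ * s) - 1 := by
  rw [intervalIntegral.integral_eq_sub_of_hasDerivAt (f := fun t => Real.exp (δ * t))
    (fun t _ => by simpa [mul_comm] using ((hasDerivAt_id t).const_mul δ).exp)
    ((by fun_prop : Continuous _).intervalIntegrable _ _)]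
  simp

lemma lintegral_Ioi_ofReal_exp_neg_mul {r : ℝ} (hr : 0 < r) (c : ℝ) :
    ∫⁻ x in Ioi c, ENNReal.ofReal (Real.exp (-r * x)) =
      ENNReal.ofReal (Real.exp (-r * c) / r) := by
  rw [← ofReal_integral_eq_lintegral_ofReal (integrableOn_exp_mul_Ioi (by linarith) c)
    (.of_forall fun _ => (Real.exp_pos _).le), integral_exp_mul_Ioi (by linarith), neg_div_neg_eq]

section Obedience

variable {δ : ℝ} {ν : Measure ℝ}

-- The Tonelli step, as the weighted layer-cake formula for the measure `e^{-δs} dν(s)`.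
lemma lintegral_Ioi_withDensity_exp_mul_eq (hδ : 0 ≤ δ) (hν : ν (Iio 0) = 0) :
    ∫⁻ t in Ioi 0, ν.withDensity (fun s => ENNReal.ofReal (Real.exp (-δ * s))) (Ioi t) *
        ENNReal.ofReal (δ * Real.exp (δ * t)) =
      ∫⁻ s, ENNReal.ofReal (1 - Real.exp (-δ * s)) ∂ν := by
  have hμ := withDensity_absolutelyContinuous ν (fun s => ENNReal.ofReal (Real.exp (-δ * s))) hν
  refine (lintegral_comp_eq_lintegral_meas_lt_mul _
    (ae_nonneg_of_measure_Iio_zero hμ) aemeasurable_id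
    (fun _ _ => (by fun_prop : Continuous _).intervalIntegrable _ _)
    (.of_forall fun t => by positivity)).symm.trans ?_
  simp only [id, integral_mul_exp_mul]
  rw [lintegral_withDensity_eq_lintegral_mul _ (by fun_prop) (by fun_prop)]
  refine lintegral_congr fun s => ?_
  rw [Pi.mul_apply, ← ENNReal.ofReal_mul (Real.exp_pos _).le, mul_sub, ← Real.exp_add]
  ring_nf
  simp

lemma lintegral_one_sub_exp_add_withDensity_Ioi (ν : Measure ℝ) (hδ : 0 ≤ δ) :
    ∫⁻ s, ENNReal.ofReal (1 - Real.exp (-δ * s)) ∂ν +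
        ν.withDensity (fun s => ENNReal.ofReal (Real.exp (-δ * s))) (Ioi 0) = ν (Ioi 0) := by
  rw [withDensity_apply _ measurableSet_Ioi, ← lintegral_indicator measurableSet_Ioi,
    ← lintegral_add_right _ ((by fun_prop : Measurable _).indicator measurableSet_Ioi),
    ← lintegral_indicator_one measurableSet_Ioi]
  refine lintegral_congr fun s => ?_
  rcases le_or_gt s 0 with hs | hs
  · have : δ * s ≤ 0 := mul_nonpos_of_nonneg_of_nonpos hδ hs
    simp [hs.not_gt, this]
  · have : Real.exp (-δ * s) ≤ 1 := Real.exp_le_one_iff.2 (by nlinarith)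
    simp only [indicator_of_mem (mem_Ioi.2 hs), Pi.one_apply]
    rw [← ENNReal.ofReal_add (by linarith) (Real.exp_pos _).le, sub_add_cancel, ENNReal.ofReal_one]

lemma lintegral_ofReal_le_of_obedience [IsProbabilityMeasure ν] (hδ : 0 < δ)
    (hν : ν (Iio 0) = 0)
    (hobey : ∀ t : ℝ, 0 ≤ t →
      (1/2 : ℝ) * Real.exp (-δ * t) * (ν (Ioi t)).toReal ≤ ∫ s in Ioi t, Real.exp (-δ * s) ∂ν) :
    ∫⁻ s, ENNReal.ofReal s ∂ν ≤ ENNReal.ofReal (1 / δ) := by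
  set μ := ν.withDensity (fun s => ENNReal.ofReal (Real.exp (-δ * s)))
  have hobey' (t : ℝ) (ht : 0 ≤ t) :
      ENNReal.ofReal (Real.exp (-δ * t)) * ν (Ioi t) ≤ 2 * μ (Ioi t) := by
    have := hobey t ht
    rw [setIntegral_eq_toReal_withDensity measurableSet_Ioi
      (.of_forall fun _ => (Real.exp_pos _).le) (by fun_prop)] at this
    rw [← ofReal_toReal (measure_ne_top ν _), ← ENNReal.ofReal_mul (Real.exp_pos _).le]
    exact ofReal_le_of_le_toReal (by rw [toReal_mul, toReal_ofNat]; linarith)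
  have hweighted (t : ℝ) (ht : 0 ≤ t) :
      ENNReal.ofReal δ * ν (Ioi t) ≤ 2 * (μ (Ioi t) * ENNReal.ofReal (δ * Real.exp (δ * t))) :=
    calc ENNReal.ofReal δ * ν (Ioi t)
        = ENNReal.ofReal (δ * Real.exp (δ * t)) *
            (ENNReal.ofReal (Real.exp (-δ * t)) * ν (Ioi t)) := by
          rw [← mul_assoc, ← ENNReal.ofReal_mul (by positivity), mul_assoc, ← Real.exp_add]
          simp
      _ ≤ ENNReal.ofReal (δ * Real.exp (δ * t)) * (2 * μ (Ioi t)) :=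
          mul_le_mul_right (hobey' t ht) _
      _ = 2 * (μ (Ioi t) * ENNReal.ofReal (δ * Real.exp (δ * t))) := by ring
  have hmean : ENNReal.ofReal δ * ∫⁻ s, ENNReal.ofReal s ∂ν ≤
      2 * ∫⁻ s, ENNReal.ofReal (1 - Real.exp (-δ * s)) ∂ν := by
    rw [lintegral_ofReal_eq_lintegral_measure_Ioi hν,
      ← lintegral_Ioi_withDensity_exp_mul_eq hδ.le hν,
      ← lintegral_const_mul' _ _ ofReal_ne_top, ← lintegral_const_mul' _ _ (by norm_num)]
    exact setLIntegral_mono' measurableSet_Ioi fun t ht => hweighted t (le_of_lt ht)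
  have hzero : ν (Ioi 0) ≤ 2 * μ (Ioi 0) := by simpa using hobey' 0 le_rfl
  have hsum : ENNReal.ofReal δ * ∫⁻ s, ENNReal.ofReal s ∂ν + ν (Ioi 0) ≤ ν (Ioi 0) + ν (Ioi 0) :=
    calc _ ≤ 2 * ∫⁻ s, ENNReal.ofReal (1 - Real.exp (-δ * s)) ∂ν + 2 * μ (Ioi 0) :=
          add_le_add hmean hzero
      _ = ν (Ioi 0) + ν (Ioi 0) := by
        rw [← mul_add, lintegral_one_sub_exp_add_withDensity_Ioi ν hδ.le, two_mul]
  rw [one_div, ENNReal.ofReal_inv_of_pos hδ, ENNReal.le_inv_iff_mul_le, mul_comm]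
  exact (ENNReal.le_of_add_le_add_right (measure_ne_top ν _) hsum).trans prob_le_one

end Obedience

section ExponentialLaw

variable {r : ℝ}

lemma expMeasure_eq_withDensity (r : ℝ) :
    expMeasure r = volume.withDensity (exponentialPDF r) :=
  rfl

lemma withDensity_restrict_Ioi_eq_expMeasure (r : ℝ) :
    (volume.restrict (Ioi 0)).withDensity (fun s => ENNReal.ofReal (r * Real.exp (-r * s))) =
      expMeasure r := by
  rw [restrict_Ioi_eq_restrict_Ici, ← withDensity_indicator measurableSet_Ici,
    expMeasure_eq_withDensity]
  congr with s
  by_cases hs : 0 ≤ s <;> simp [exponentialPDF_eq, hs]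

lemma expMeasure_Iio_zero (r : ℝ) : expMeasure r (Iio 0) = 0 := by
  rw [expMeasure_eq_withDensity, withDensity_apply _ measurableSet_Iio]
  exact lintegral_exponentialPDF_of_nonpos le_rfl

lemma expMeasure_Ioi {t : ℝ} (hr : 0 < r) (ht : 0 ≤ t) :
    expMeasure r (Ioi t) = ENNReal.ofReal (Real.exp (-r * t)) := by
  rw [expMeasure_eq_withDensity, withDensity_apply _ measurableSet_Ioi,
    setLIntegral_congr_fun measurableSet_Ioi
      (g := fun s => ENNReal.ofReal r * ENNReal.ofReal (Real.exp (-r * s))) fun s hs => by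
        rw [exponentialPDF_of_nonneg (ht.trans hs.le), ENNReal.ofReal_mul hr.le, ← neg_mul],
    lintegral_const_mul' _ _ ofReal_ne_top, lintegral_Ioi_ofReal_exp_neg_mul hr,
    ← ENNReal.ofReal_mul hr.le, mul_div_cancel₀ _ hr.ne']

lemma lintegral_ofReal_expMeasure (hr : 0 < r) :
    ∫⁻ s, ENNReal.ofReal s ∂expMeasure r = ENNReal.ofReal (1 / r) := by
  rw [lintegral_ofReal_eq_lintegral_measure_Ioi (expMeasure_Iio_zero r),
    setLIntegral_congr_fun measurableSet_Ioi fun t ht => expMeasure_Ioi hr (le_of_lt ht),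
    lintegral_Ioi_ofReal_exp_neg_mul hr, mul_zero, Real.exp_zero]

lemma expMeasure_withDensity_exp_neg_mul (hr : 0 ≤ r) :
    (expMeasure r).withDensity (fun s => ENNReal.ofReal (Real.exp (-r * s))) =
      (2 : ℝ≥0∞)⁻¹ • expMeasure (2 * r) := by
  have hpdf (r : ℝ) : Measurable (exponentialPDF r) :=
    (measurable_exponentialPDFReal r).ennreal_ofReal
  rw [expMeasure_eq_withDensity, expMeasure_eq_withDensity,
    ← withDensity_mul _ (hpdf r) (by fun_prop), ← withDensity_smul _ (hpdf _)]
  refine congrArg _ (funext fun s => ?_)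
  rcases le_or_gt 0 s with hs | hs
  · rw [Pi.mul_apply, Pi.smul_apply, exponentialPDF_of_nonneg hs, exponentialPDF_of_nonneg hs,
      smul_eq_mul, ← ENNReal.ofReal_mul (by positivity), ← ENNReal.ofReal_ofNat,
      ← ENNReal.ofReal_inv_of_pos two_pos, ← ENNReal.ofReal_mul (by positivity), mul_assoc,
      ← Real.exp_add]
    ring_nf
  · simp [exponentialPDF_of_neg hs]

lemma setIntegral_exp_neg_mul_expMeasure {t : ℝ} (hr : 0 < r) (ht : 0 ≤ t) :
    ∫ s in Ioi t, Real.exp (-r * s) ∂expMeasure r =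
      1 / 2 * Real.exp (-r * t) * (expMeasure r (Ioi t)).toReal := by
  rw [setIntegral_eq_toReal_withDensity measurableSet_Ioi
      (.of_forall fun _ => (Real.exp_pos _).le) (by fun_prop),
    expMeasure_withDensity_exp_neg_mul hr.le, Measure.smul_apply,
    expMeasure_Ioi (by positivity) ht, expMeasure_Ioi hr ht, smul_eq_mul, toReal_mul,
    toReal_ofReal (Real.exp_pos _).le, toReal_ofReal (Real.exp_pos _).le, mul_assoc,
    ← Real.exp_add, toReal_inv, toReal_ofNat]
  ring_nf

end ExponentialLaw

/-- **Optimal revelation time in the simple example with an undiscounted principal.**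
If `ν` is a Borel probability measure on `[0,∞)` (the distribution of the revelation
time) such that for every `t ≥ 0` the agent's obedience constraint
`∫_{(t,∞)} e^{-δ s} dν ≥ (1/2) e^{-δ t} ν((t,∞))` holds, then the expected revelation
time is at most `1/δ`; moreover the exponential distribution with rate `δ` satisfies
every constraint with equality and attains expected revelation time `1/δ`. -/
theorem simple_example_undiscounted_principal (δ : ℝ) (hδ : 0 < δ) :
    (∀ ν : Measure ℝ, IsProbabilityMeasure ν → ν (Iio 0) = 0 →
      (∀ t : ℝ, 0 ≤ t →
        (1/2 : ℝ) * Real.exp (-δ * t) * (ν (Ioi t)).toReal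
          ≤ ∫ s in Ioi t, Real.exp (-δ * s) ∂ν) →
      ∫⁻ s, ENNReal.ofReal s ∂ν ≤ ENNReal.ofReal (1/δ)) ∧
    (let νexp : Measure ℝ :=
      (volume.restrict (Ioi (0:ℝ))).withDensity fun s => ENNReal.ofReal (δ * Real.exp (-δ * s))
     IsProbabilityMeasure νexp ∧ νexp (Iio 0) = 0 ∧
     (∀ t : ℝ, 0 ≤ t →
        (1/2 : ℝ) * Real.exp (-δ * t) * (νexp (Ioi t)).toReal
          = ∫ s in Ioi t, Real.exp (-δ * s) ∂νexp) ∧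
     ∫⁻ s, ENNReal.ofReal s ∂νexp = ENNReal.ofReal (1/δ)) := by
  refine ⟨fun ν _ hν hobey => lintegral_ofReal_le_of_obedience hδ hν hobey, ?_⟩
  intro νexp
  rw [show νexp = expMeasure δ from withDensity_restrict_Ioi_eq_expMeasure δ]
  exact ⟨isProbabilityMeasure_expMeasure hδ, expMeasure_Iio_zero δ,
    fun t ht => (setIntegral_exp_neg_mul_expMeasure hδ ht).symm, lintegral_ofReal_expMeasure hδ⟩
end

section
/- Deterministic revelation is optimal in the simple example with a more patient agent: let δ_P ≥ δ_A > 0 and let ν be a Borel probability measure on [0,∞) with ∫ e^{-δ_A s} dν(s) ≥ 1/2. Then ∫ (1 - e^{-δ_P s})/δ_P dν(s) ≤ (1 - 2^{-δ_P/δ_A})/δ_P. Moreover, the point mass at T̂ = (log 2)/δ_A satisfies the constraint with equality and attains this bound. -/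
/-!
Since `e^{-δP s} = (e^{-δA s})^{δP/δA}` and `x ↦ x^{δP/δA}` is convex on `[0, ∞)`, Jensen's
inequality and the participation constraint give
`E e^{-δP T} ≥ (E e^{-δA T})^{δP/δA} ≥ 2^{-δP/δA}`, which is the bound on the payoff
`(1 - E e^{-δP T}) / δP`. The deterministic time `log 2 / δA` makes both inequalities equalities.
-/

open MeasureTheory Set Real

lemma ae_nonneg_of_measure_Iio_eq_zero {ν : Measure ℝ} (h : ν (Iio 0) = 0) :
    ∀ᵐ s ∂ν, 0 ≤ s := by
  rw [ae_iff]
  exact measure_mono_null (fun _ hs => not_le.mp hs) h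

lemma integrable_exp_neg_mul {ν : Measure ℝ} [IsFiniteMeasure ν] (hν : ∀ᵐ s ∂ν, 0 ≤ s)
    {c : ℝ} (hc : 0 ≤ c) : Integrable (fun s => exp (-c * s)) ν := by
  refine (integrable_const (1 : ℝ)).mono' (by fun_prop) ?_
  filter_upwards [hν] with s hs
  rw [norm_of_nonneg (exp_pos _).le, exp_le_one_iff]
  nlinarith

lemma rpow_integral_le_integral_rpow {α : Type*} [MeasurableSpace α] {μ : Measure α}
    [IsProbabilityMeasure μ] {f : α → ℝ} {p : ℝ} (hp : 1 ≤ p) (hf0 : ∀ᵐ x ∂μ, 0 ≤ f x)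
    (hf : Integrable f μ) (hfp : Integrable (fun x => f x ^ p) μ) :
    (∫ x, f x ∂μ) ^ p ≤ ∫ x, f x ^ p ∂μ :=
  (convexOn_rpow hp).map_integral_le (continuousOn_id.rpow_const fun _ _ => Or.inr (by linarith))
    isClosed_Ici hf0 hf hfp

lemma exp_neg_mul_rpow_div {a : ℝ} (ha : a ≠ 0) (b s : ℝ) :
    exp (-a * s) ^ (b / a) = exp (-b * s) := by
  rw [← exp_mul]
  congr 1
  field_simp

lemma integral_exp_neg_mul_rpow_le {ν : Measure ℝ} [IsProbabilityMeasure ν]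
    (hν : ∀ᵐ s ∂ν, 0 ≤ s) {a b : ℝ} (ha : 0 < a) (hab : a ≤ b) :
    (∫ s, exp (-a * s) ∂ν) ^ (b / a) ≤ ∫ s, exp (-b * s) ∂ν := by
  have hpow := exp_neg_mul_rpow_div ha.ne' b
  have hb : 0 ≤ b := ha.le.trans hab
  calc (∫ s, exp (-a * s) ∂ν) ^ (b / a)
      ≤ ∫ s, exp (-a * s) ^ (b / a) ∂ν :=
        rpow_integral_le_integral_rpow ((one_le_div ha).2 hab)
          (.of_forall fun s => (exp_pos _).le) (integrable_exp_neg_mul hν ha.le)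
          (by simpa only [hpow] using integrable_exp_neg_mul hν hb)
    _ = ∫ s, exp (-b * s) ∂ν := by simp only [hpow]

lemma integral_one_sub_exp_neg_mul_div {ν : Measure ℝ} [IsProbabilityMeasure ν]
    (hν : ∀ᵐ s ∂ν, 0 ≤ s) {c : ℝ} (hc : 0 ≤ c) :
    ∫ s, (1 - exp (-c * s)) / c ∂ν = (1 - ∫ s, exp (-c * s) ∂ν) / c := by
  rw [integral_div, integral_sub (integrable_const 1) (integrable_exp_neg_mul hν hc),
    integral_const, probReal_univ, one_smul]

lemma exp_neg_mul_log_two_div (a b : ℝ) : exp (-b * (log 2 / a)) = (2 : ℝ) ^ (-(b / a)) := by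
  rw [rpow_def_of_pos two_pos]
  ring_nf

/-- **Deterministic revelation is optimal in the simple example with a more patient
agent.** If `δP ≥ δA > 0` and `ν` is a Borel probability measure on `[0,∞)` satisfying
the agent's participation constraint `∫ e^{-δA s} dν ≥ 1/2`, then the principal's payoff
`∫ (1 - e^{-δP s})/δP dν` is at most `(1 - 2^{-δP/δA})/δP`; moreover the point mass at
`T̂ = (log 2)/δA` satisfies the constraint with equality and attains this bound. -/
theorem deterministic_revelation_optimal
    (δA δP : ℝ) (hδA : 0 < δA) (hδ : δA ≤ δP) :
    (∀ ν : Measure ℝ, IsProbabilityMeasure ν → ν (Iio 0) = 0 →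
      (1/2 : ℝ) ≤ ∫ s, Real.exp (-δA * s) ∂ν →
      ∫ s, (1 - Real.exp (-δP * s)) / δP ∂ν
        ≤ (1 - (2:ℝ) ^ (-(δP / δA))) / δP) ∧
    (∫ s, Real.exp (-δA * s) ∂(Measure.dirac (Real.log 2 / δA)) = 1/2 ∧
     ∫ s, (1 - Real.exp (-δP * s)) / δP ∂(Measure.dirac (Real.log 2 / δA))
        = (1 - (2:ℝ) ^ (-(δP / δA))) / δP) := by
  have hδP : 0 < δP := hδA.trans_le hδ
  refine ⟨fun ν _ hν0 hconstr => ?_, ?_, ?_⟩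
  · have hν := ae_nonneg_of_measure_Iio_eq_zero hν0
    rw [integral_one_sub_exp_neg_mul_div hν hδP.le]
    gcongr
    calc (2 : ℝ) ^ (-(δP / δA)) = (1 / 2) ^ (δP / δA) := by
          rw [rpow_neg zero_le_two, ← inv_rpow zero_le_two, one_div]
      _ ≤ (∫ s, exp (-δA * s) ∂ν) ^ (δP / δA) :=
          rpow_le_rpow (by norm_num) hconstr (div_nonneg hδP.le hδA.le)
      _ ≤ ∫ s, exp (-δP * s) ∂ν := integral_exp_neg_mul_rpow_le hν hδA hδ
  · rw [integral_dirac, exp_neg_mul_log_two_div, div_self hδA.ne', rpow_neg_one, one_div]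
  · rw [integral_dirac, exp_neg_mul_log_two_div]
end

section
/- Monotonicity of the phase-transition multiplier (key step for Corollary 1): let v : [0,1] → ℝ be continuously differentiable, convex, and positive, let δ_P > δ_A > 0, and set κ = (δ_A - δ_P)/δ_A < 0. Define Ψ(μ) = ∫_μ^1 Δ_0(x)/(x·v(x)) dx for μ ∈ (0,1], and Φ(μ_1) = e^{∫_{μ_1}^1 v(1)/(x·v(x)) dx}·e^{-κ·Ψ(μ_1)}/(δ_A·v(1)) - ∫_{μ_1}^1 (e^{-κ·Ψ(x)}/(δ_A·x·v(x)))·e^{∫_x^1 v(1)/(z·v(z)) dz} dx for μ_1 ∈ (0,1). Then Φ is differentiable on (0,1) with Φ'(μ_1) = κ·Δ_0(μ_1)·e^{∫_{μ_1}^1 v(1)/(x·v(x)) dx}·e^{-κ·Ψ(μ_1)} / (δ_A·v(1)·μ_1·v(μ_1)); in particular Φ'(μ_1) < 0 wherever Δ_0(μ_1) > 0, so Φ is strictly decreasing there. -/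
/-!
Differentiating `Φ` by the fundamental theorem of calculus, the contribution of the first
exponential cancels the derivative of the subtracted integral, leaving only the term coming
from `Ψ' = -Δ₀/(x v)`; its sign is that of `κ Δ₀`. Convexity of `v` makes `x v'(x) - v(x)`,
hence `Δ₀`, nondecreasing, so `{Δ₀ > 0}` is an interval and `Φ' < 0` there gives strict
monotonicity.
-/

open Set intervalIntegral MeasureTheory Real

section IntegralToOne

variable {g : ℝ → ℝ} {a b μ : ℝ}

theorem continuousOn_integral_left_of_continuousOn (hg : ContinuousOn g (Icc a b))
    (hab : a ≤ b) : ContinuousOn (fun u => ∫ x in u..b, g x) (Icc a b) := by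
  simpa only [uIcc_of_le hab] using
    continuousOn_primitive_interval_left (μ := volume) (a := a) (b := b)
      (by rw [uIcc_of_le hab]; exact hg.integrableOn_Icc)

theorem hasDerivAt_integral_left_of_continuousOn (hg : ContinuousOn g (Icc a b))
    (hμ : μ ∈ Ioo a b) : HasDerivAt (fun u => ∫ x in u..b, g x) (-g μ) μ := by
  have hint : IntervalIntegrable g volume μ b :=
    (hg.mono (Icc_subset_Icc_left hμ.1.le)).intervalIntegrable_of_Icc hμ.2.le
  exact integral_hasDerivAt_left hint
    ((hg.mono Ioo_subset_Icc_self).stronglyMeasurableAtFilter isOpen_Ioo μ hμ)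
    (hg.continuousAt (Icc_mem_nhds hμ.1 hμ.2))

end IntegralToOne

theorem ConvexOn.monotoneOn_mul_deriv_sub {v v' : ℝ → ℝ} {s : Set ℝ}
    (hconv : ConvexOn ℝ s v) (hs : s ⊆ Ici 0)
    (hderiv : ∀ x ∈ s, HasDerivWithinAt v (v' x) s x) :
    MonotoneOn (fun x => x * v' x - v x) s := by
  intro p hp q hq hpq
  rcases hpq.eq_or_lt with rfl | hlt
  · exact le_rfl
  have hslope_p : v' p ≤ slope v p q := hconv.le_slope_of_hasDerivWithinAt hp hq hlt (hderiv p hp)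
  have hslope_q : slope v p q ≤ v' q := hconv.slope_le_of_hasDerivWithinAt hp hq hlt (hderiv q hq)
  have hchord : v q - v p ≤ v' q * (q - p) := by
    rwa [slope_def_field, div_le_iff₀ (sub_pos.2 hlt)] at hslope_q
  have hp_mul : p * v' p ≤ p * v' q :=
    mul_le_mul_of_nonneg_left (hslope_p.trans hslope_q) (hs hp)
  dsimp only
  nlinarith

theorem hasDerivAt_phase_transition_multiplier {v D : ℝ → ℝ} (c : ℝ) {d μ : ℝ}
    (hv : ContinuousOn v (Ioc 0 1)) (hv_ne : ∀ x ∈ Ioc (0:ℝ) 1, v x ≠ 0)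
    (hD : ContinuousOn D (Ioc 0 1)) (hd : d ≠ 0) (hμ : μ ∈ Ioo (0:ℝ) 1) :
    HasDerivAt (fun u =>
        exp (∫ x in u..1, v 1 / (x * v x)) * exp (-c * ∫ x in u..1, D x / (x * v x)) / (d * v 1)
        - ∫ x in u..1, exp (-c * ∫ z in x..1, D z / (z * v z)) / (d * x * v x)
            * exp (∫ z in x..1, v 1 / (z * v z)))
      (c * D μ * exp (∫ x in μ..1, v 1 / (x * v x))
        * exp (-c * ∫ x in μ..1, D x / (x * v x)) / (d * v 1 * (μ * v μ))) μ := by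
  have hμ₀ : μ ≠ 0 := hμ.1.ne'
  have hvμ : v μ ≠ 0 := hv_ne μ (Ioo_subset_Ioc_self hμ)
  have hv₁ : v 1 ≠ 0 := hv_ne 1 (right_mem_Ioc.2 zero_lt_one)
  -- `[μ/2, 1]` is a compact neighbourhood of `μ` inside `(0, 1]`
  have hμ' : μ ∈ Ioo (μ / 2) 1 := ⟨half_lt_self hμ.1, hμ.2⟩
  have hsub : Icc (μ / 2) 1 ⊆ Ioc 0 1 := Icc_subset_Ioc_iff (by linarith [hμ.2]) |>.2
    ⟨half_pos hμ.1, le_rfl⟩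
  have hxv : ContinuousOn (fun x => x * v x) (Icc (μ / 2) 1) := continuousOn_id.mul (hv.mono hsub)
  have hxv_ne : ∀ x ∈ Icc (μ / 2) 1, x * v x ≠ 0 := fun x hx =>
    mul_ne_zero (hsub hx).1.ne' (hv_ne x (hsub hx))
  have hg₁ : ContinuousOn (fun x => v 1 / (x * v x)) (Icc (μ / 2) 1) :=
    continuousOn_const.div hxv hxv_ne
  have hg₂ : ContinuousOn (fun x => D x / (x * v x)) (Icc (μ / 2) 1) :=
    (hD.mono hsub).div hxv hxv_ne
  have hf : ContinuousOn (fun x => exp (-c * ∫ z in x..1, D z / (z * v z)) / (d * x * v x)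
      * exp (∫ z in x..1, v 1 / (z * v z))) (Icc (μ / 2) 1) := by
    have hμ_le : μ / 2 ≤ 1 := by linarith [hμ.2]
    refine ContinuousOn.mul (ContinuousOn.div ?_ ?_ ?_) ?_
    · exact (continuousOn_const.mul
        (continuousOn_integral_left_of_continuousOn hg₂ hμ_le)).rexp
    · exact (continuousOn_const.mul continuousOn_id).mul (hv.mono hsub)
    · exact fun x hx => mul_assoc d x (v x) ▸ mul_ne_zero hd (hxv_ne x hx)
    · exact (continuousOn_integral_left_of_continuousOn hg₁ hμ_le).rexp
  have hA := hasDerivAt_integral_left_of_continuousOn hg₁ hμ'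
  have hP := hasDerivAt_integral_left_of_continuousOn hg₂ hμ'
  have hB := hasDerivAt_integral_left_of_continuousOn hf hμ'
  refine (((hA.exp.mul (hP.const_mul (-c)).exp).div_const (d * v 1)).sub hB).congr_deriv ?_
  field_simp
  ring

/-- **Monotonicity of the phase-transition multiplier (key step for Corollary 1).**
With `κ = (δA - δP)/δA < 0`, `Ψ(μ) = ∫_μ^1 Δ₀(x)/(x v(x)) dx` and
`Φ(μ₁) = e^{∫_{μ₁}^1 v(1)/(x v(x)) dx} e^{-κ Ψ(μ₁)}/(δA v(1))
        - ∫_{μ₁}^1 (e^{-κ Ψ(x)}/(δA x v(x))) e^{∫_x^1 v(1)/(z v(z)) dz} dx`,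
the function `Φ` is differentiable on `(0,1)` with
`Φ'(μ₁) = κ Δ₀(μ₁) e^{∫_{μ₁}^1 v(1)/(x v(x)) dx} e^{-κ Ψ(μ₁)}/(δA v(1) μ₁ v(μ₁))`;
in particular `Φ' < 0` wherever `Δ₀ > 0`, so `Φ` is strictly decreasing there. -/
theorem phase_transition_multiplier_monotone
    (v v' : ℝ → ℝ) (δA δP : ℝ)
    (hδA : 0 < δA) (hδ : δA < δP)
    (hconv : ConvexOn ℝ (Icc (0:ℝ) 1) v)
    (hderiv : ∀ x ∈ Icc (0:ℝ) 1, HasDerivWithinAt v (v' x) (Icc (0:ℝ) 1) x)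
    (hcont : ContinuousOn v' (Icc (0:ℝ) 1))
    (hpos : ∀ x ∈ Icc (0:ℝ) 1, 0 < v x) :
    let κ : ℝ := (δA - δP) / δA
    let Δ0 : ℝ → ℝ := fun μ => v 1 - v μ + μ * v' μ
    let Ψ : ℝ → ℝ := fun μ => ∫ x in μ..(1:ℝ), Δ0 x / (x * v x)
    let Φ : ℝ → ℝ := fun μ1 =>
      Real.exp (∫ x in μ1..(1:ℝ), v 1 / (x * v x)) * Real.exp (-κ * Ψ μ1) / (δA * v 1)
      - ∫ x in μ1..(1:ℝ),
          (Real.exp (-κ * Ψ x) / (δA * x * v x))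
            * Real.exp (∫ z in x..(1:ℝ), v 1 / (z * v z))
    (∀ μ1 ∈ Ioo (0:ℝ) 1,
      HasDerivAt Φ
        (κ * Δ0 μ1 * Real.exp (∫ x in μ1..(1:ℝ), v 1 / (x * v x))
            * Real.exp (-κ * Ψ μ1) / (δA * v 1 * (μ1 * v μ1))) μ1) ∧
    (∀ μ1 ∈ Ioo (0:ℝ) 1, 0 < Δ0 μ1 →
      κ * Δ0 μ1 * Real.exp (∫ x in μ1..(1:ℝ), v 1 / (x * v x))
          * Real.exp (-κ * Ψ μ1) / (δA * v 1 * (μ1 * v μ1)) < 0) ∧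
    StrictAntiOn Φ {μ1 | μ1 ∈ Ioo (0:ℝ) 1 ∧ 0 < Δ0 μ1} := by
  intro κ Δ0 Ψ Φ
  have hκ : κ < 0 := div_neg_of_neg_of_pos (by linarith) hδA
  have hv : ContinuousOn v (Icc 0 1) := fun x hx => (hderiv x hx).continuousWithinAt
  have hΔ0 : ContinuousOn Δ0 (Icc 0 1) :=
    (continuousOn_const.sub hv).add (continuousOn_id.mul hcont)
  have hΦ : ∀ μ1 ∈ Ioo (0:ℝ) 1, HasDerivAt Φ
      (κ * Δ0 μ1 * exp (∫ x in μ1..1, v 1 / (x * v x))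
        * exp (-κ * Ψ μ1) / (δA * v 1 * (μ1 * v μ1))) μ1 := fun μ1 hμ1 =>
    hasDerivAt_phase_transition_multiplier κ (hv.mono Ioc_subset_Icc_self)
      (fun x hx => (hpos x (Ioc_subset_Icc_self hx)).ne') (hΔ0.mono Ioc_subset_Icc_self)
      hδA.ne' hμ1
  have hneg : ∀ μ1 ∈ Ioo (0:ℝ) 1, 0 < Δ0 μ1 →
      κ * Δ0 μ1 * exp (∫ x in μ1..1, v 1 / (x * v x))
        * exp (-κ * Ψ μ1) / (δA * v 1 * (μ1 * v μ1)) < 0 := by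
    intro μ1 hμ1 hΔ
    have hv₁ := hpos 1 (right_mem_Icc.2 zero_le_one)
    have hvμ := hpos μ1 (Ioo_subset_Icc_self hμ1)
    have hμ1₀ := hμ1.1
    exact div_neg_of_neg_of_pos
      (mul_neg_of_neg_of_pos (mul_neg_of_neg_of_pos (mul_neg_of_neg_of_pos hκ hΔ)
        (exp_pos _)) (exp_pos _)) (by positivity)
  refine ⟨hΦ, hneg, ?_⟩
  have hΔ0_mono : MonotoneOn Δ0 (Icc 0 1) := fun p hp q hq hpq => by
    have := hconv.monotoneOn_mul_deriv_sub (fun x hx => hx.1) hderiv hp hq hpq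
    dsimp only [Δ0] at this ⊢
    linarith
  have hS : OrdConnected {μ1 | μ1 ∈ Ioo (0:ℝ) 1 ∧ 0 < Δ0 μ1} :=
    ⟨fun a ha b hb x hx => ⟨⟨ha.1.1.trans_le hx.1, hx.2.trans_lt hb.1.2⟩,
      ha.2.trans_le (hΔ0_mono (Ioo_subset_Icc_self ha.1)
        (Icc_subset_Icc ha.1.1.le hb.1.2.le hx) hx.1)⟩⟩
  refine strictAntiOn_of_deriv_neg hS.convex
    (fun x hx => (hΦ x hx.1).continuousAt.continuousWithinAt) fun x hx => ?_
  obtain ⟨hx, hΔx⟩ := interior_subset hx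
  rw [(hΦ x hx).deriv]
  exact hneg x hx hΔx
end
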